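/- arXiv:2304.03234 — 6 statements merged into one kernel-verified Lean document; each statement's English description precedes it below -/
import Mathlib

section
/- Let n ≥ 1 and d ≥ 2 be integers and let A₁, …, Aₙ be real d×d matrices. Then E_{σ} ‖Σ_{i=1}^n σᵢ Aᵢ‖₂ ≤ 10 √(log d) · (Σ_{i=1}^n ‖Aᵢ‖₂²)^{1/2}, where σ = (σ₁,…,σₙ) is uniformly distributed on {−1,1}ⁿ. -/
/-!
Pass to the `2p`-th moment with `p = 2 ^ k ≈ log d` (Jensen). Since `‖B ^ 2 ^ k‖ = ‖B‖ ^ 2 ^ k`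
for self-adjoint `B`, `‖X‖ ^ (2p) ≤ tr ((Xᵀ X) ^ p)`. Expanding `(Xᵀ X) ^ p` for
`X = ∑ σᵢ Aᵢ` into words in the `Aᵢ`, the sign average of every word is `0` or `1` and the trace
of a word is at most `d` times the product of the norms of its letters, so
`𝔼 tr ((Xᵀ X) ^ p) ≤ d 𝔼 (∑ σᵢ ‖Aᵢ‖) ^ (2p)`. The scalar Rademacher moment is at most
`2 (2 e p S) ^ p`, `S = ∑ ‖Aᵢ‖²`, by the Chernoff bound `cosh x ≤ exp (x² / 2)`, and for
`p ≈ log d` the factor `d ^ (1 / 2p)` is bounded.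
-/

/-- The spectral norm `‖M‖₂ = max { uᵀ M v : ‖u‖₂ = ‖v‖₂ = 1 }` of a real `d × d` matrix. -/
noncomputable def specNorm {d : ℕ} (M : Matrix (Fin d) (Fin d) ℝ) : ℝ :=
  sSup {c : ℝ | ∃ u v : Fin d → ℝ, ∑ i, u i ^ 2 = 1 ∧ ∑ i, v i ^ 2 = 1 ∧
    c = ∑ i, ∑ j, u i * M i j * v j}

open Finset Matrix
open scoped Nat RealInnerProductSpace Matrix.Norms.L2Operator

section InnerProductSpace

variable {E F : Type*} [NormedAddCommGroup E] [InnerProductSpace ℝ E]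
  [NormedAddCommGroup F] [InnerProductSpace ℝ F]

theorem exists_norm_eq_one_inner_eq_norm [Nontrivial F] (z : F) :
    ∃ x : F, ‖x‖ = 1 ∧ ⟪x, z⟫ = ‖z‖ := by
  rcases eq_or_ne z 0 with rfl | hz
  · obtain ⟨x, hx⟩ := exists_norm_eq F zero_le_one
    exact ⟨x, hx, by simp⟩
  · refine ⟨‖z‖⁻¹ • z, norm_smul_inv_norm hz, ?_⟩
    rw [real_inner_smul_left, real_inner_self_eq_norm_sq]
    field_simp

theorem ContinuousLinearMap.sSup_inner_sphere_eq_norm [Nontrivial E] [Nontrivial F]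
    (T : E →L[ℝ] F) : sSup {c | ∃ x y, ‖x‖ = 1 ∧ ‖y‖ = 1 ∧ c = ⟪x, T y⟫} = ‖T‖ := by
  have hle : ∀ c ∈ {c | ∃ x y, ‖x‖ = 1 ∧ ‖y‖ = 1 ∧ c = ⟪x, T y⟫}, c ≤ ‖T‖ := by
    rintro - ⟨x, y, hx, hy, rfl⟩
    calc ⟪x, T y⟫ ≤ ‖x‖ * ‖T y‖ := real_inner_le_norm _ _
      _ ≤ ‖T‖ := by simpa [hx, hy] using T.le_opNorm y
  refine le_antisymm (Real.sSup_le hle (norm_nonneg T)) ?_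
  rw [← T.sSup_sphere_eq_norm]
  refine csSup_le_csSup ⟨_, hle⟩ ((NormedSpace.sphere_nonempty.2 zero_le_one).image _) ?_
  rintro - ⟨y, hy, rfl⟩
  obtain ⟨x, hx, hxy⟩ := exists_norm_eq_one_inner_eq_norm (T y)
  exact ⟨x, y, hx, mem_sphere_zero_iff_norm.1 hy, hxy.symm⟩

end InnerProductSpace

theorem EuclideanSpace.norm_eq_one_iff {ι : Type*} [Fintype ι] (x : EuclideanSpace ℝ ι) :
    ‖x‖ = 1 ↔ ∑ i, x i ^ 2 = 1 := by
  simp [EuclideanSpace.norm_eq, Real.sqrt_eq_one]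

theorem specNorm_eq_l2_opNorm {d : ℕ} [NeZero d] (M : Matrix (Fin d) (Fin d) ℝ) :
    specNorm M = ‖M‖ := by
  rw [cstar_norm_def, ← ContinuousLinearMap.sSup_inner_sphere_eq_norm, specNorm]
  congr 1
  have hinner (x y : EuclideanSpace ℝ (Fin d)) :
      ⟪x, toEuclideanCLM (𝕜 := ℝ) M y⟫ = ∑ i, ∑ j, x i * M i j * y j := by
    simp only [inner_toEuclideanCLM, dotProduct, mulVec, Finset.mul_sum, mul_assoc]
  ext c
  simp only [Set.mem_ofPred_eq, EuclideanSpace.norm_eq_one_iff, hinner]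
  exact ⟨fun ⟨u, v, h⟩ => ⟨WithLp.toLp 2 u, WithLp.toLp 2 v, h⟩, fun ⟨x, y, h⟩ => ⟨x, y, h⟩⟩

namespace Matrix

variable {m : Type*} [Fintype m] [DecidableEq m]

theorem diag_le_l2_opNorm (M : Matrix m m ℝ) (i : m) : M i i ≤ ‖M‖ := by
  set e : EuclideanSpace ℝ m := EuclideanSpace.single i 1
  have he : ‖e‖ = 1 := by simp [e]
  calc M i i = ⟪e, toEuclideanCLM (𝕜 := ℝ) M e⟫ := by simp [e, inner_toEuclideanCLM]
    _ ≤ ‖e‖ * (‖toEuclideanCLM (𝕜 := ℝ) M‖ * ‖e‖) :=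
      (real_inner_le_norm _ _).trans (by gcongr; exact ContinuousLinearMap.le_opNorm _ _)
    _ = ‖M‖ := by rw [he, one_mul, mul_one, cstar_norm_def]

theorem trace_le_card_mul_l2_opNorm (M : Matrix m m ℝ) : trace M ≤ Fintype.card m * ‖M‖ := by
  simpa [trace] using Finset.sum_le_sum fun i (_ : i ∈ univ) => M.diag_le_l2_opNorm i

theorem l2_opNorm_sq_le_trace_conjTranspose_mul_self (Y : Matrix m m ℝ) :
    ‖Y‖ ^ 2 ≤ trace (Yᴴ * Y) := by
  have htrace : trace (Yᴴ * Y) = ∑ i, ∑ j, Y i j ^ 2 := by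
    simp only [trace, diag, mul_apply, conjTranspose_apply, star_trivial, sq]
    exact Finset.sum_comm
  have hnonneg : 0 ≤ trace (Yᴴ * Y) := htrace ▸ by positivity
  have hnorm : ‖Y‖ ≤ √(trace (Yᴴ * Y)) := by
    refine ContinuousLinearMap.opNorm_le_bound _ (Real.sqrt_nonneg _) fun v => ?_
    rw [EuclideanSpace.norm_eq, EuclideanSpace.norm_eq, ← Real.sqrt_mul hnonneg,
      Real.sqrt_le_sqrt_iff (by positivity), htrace, Finset.sum_mul]
    refine Finset.sum_le_sum fun i _ => ?_
    simpa [ofLp_toEuclideanCLM, mulVec, dotProduct] using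
      Finset.sum_mul_sq_le_sq_mul_sq univ (Y i) v.ofLp
  calc ‖Y‖ ^ 2 ≤ √(trace (Yᴴ * Y)) ^ 2 := by gcongr
    _ = trace (Yᴴ * Y) := Real.sq_sqrt hnonneg

theorem l2_opNorm_pow_le_trace_pow (X : Matrix m m ℝ) (k : ℕ) :
    ‖X‖ ^ (2 * 2 ^ k) ≤ trace ((Xᴴ * X) ^ 2 ^ k) := by
  cases k with
  | zero => simpa using X.l2_opNorm_sq_le_trace_conjTranspose_mul_self
  | succ k =>
    have hXX : IsSelfAdjoint (Xᴴ * X) := IsSelfAdjoint.star_mul_self X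
    have hnorm : ‖(Xᴴ * X) ^ 2 ^ k‖ = ‖X‖ ^ (2 * 2 ^ k) := by
      rw [hXX.norm_pow_two_pow, l2_opNorm_conjTranspose_mul_self, ← sq, pow_mul]
    set B := (Xᴴ * X) ^ 2 ^ k
    have hB : Bᴴ = B := (hXX.pow _).star_eq
    calc ‖X‖ ^ (2 * 2 ^ (k + 1)) = ‖B‖ ^ 2 := by rw [hnorm, ← pow_mul]; ring_nf
      _ ≤ trace (Bᴴ * B) := B.l2_opNorm_sq_le_trace_conjTranspose_mul_self
      _ = trace ((Xᴴ * X) ^ 2 ^ (k + 1)) := by rw [hB, ← sq, ← pow_mul, ← pow_succ]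

end Matrix

theorem sum_smul_pow_eq_sum_prod_smul_prod {𝕜 R Q : Type*} [CommSemiring 𝕜] [Semiring R]
    [Algebra 𝕜 R] [Fintype Q] (c : Q → 𝕜) (N : Q → R) (p : ℕ) :
    (∑ q, c q • N q) ^ p = ∑ w : Fin p → Q, (∏ k, c (w k)) • (List.ofFn (N ∘ w)).prod := by
  induction p with
  | zero => simp
  | succ p ih =>
    rw [pow_succ', ih, Finset.sum_mul_sum, ← Fintype.sum_prod_type',
      ← (Fin.consEquiv fun _ => Q).sum_comp]
    refine Fintype.sum_congr _ _ fun ⟨q, w⟩ => ?_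
    simp only [Fin.consEquiv_apply, Fin.prod_univ_succ, Fin.cons_zero, Fin.cons_succ,
      List.ofFn_succ, Function.comp_apply, List.prod_cons, smul_mul_smul_comm]
    rfl

theorem sum_mul_pow_eq_sum_prod_mul_prod {Q : Type*} [Fintype Q] (c b : Q → ℝ) (p : ℕ) :
    (∑ q, c q * b q) ^ p = ∑ w : Fin p → Q, (∏ k, c (w k)) * ∏ k, b (w k) := by
  simpa [List.prod_ofFn] using sum_smul_pow_eq_sum_prod_smul_prod c b p

theorem Matrix.sum_trace_sum_smul_pow_le {S Q m : Type*} [Fintype S] [Fintype Q] [Fintype m]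
    [DecidableEq m] [Nonempty m] (c : S → Q → ℝ) (N : Q → Matrix m m ℝ) (b : Q → ℝ) (p : ℕ)
    (hN : ∀ q, ‖N q‖ ≤ b q) (hc : ∀ w : Fin p → Q, 0 ≤ ∑ s, ∏ k, c s (w k)) :
    ∑ s, trace ((∑ q, c s q • N q) ^ p) ≤ Fintype.card m * ∑ s, (∑ q, c s q * b q) ^ p := by
  have hword (w : Fin p → Q) :
      trace (List.ofFn (N ∘ w)).prod ≤ Fintype.card m * ∏ k, b (w k) := by
    calc trace (List.ofFn (N ∘ w)).prod ≤ Fintype.card m * ‖(List.ofFn (N ∘ w)).prod‖ :=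
          trace_le_card_mul_l2_opNorm _
      _ ≤ Fintype.card m * ∏ k, ‖N (w k)‖ := by
          gcongr
          simpa [List.map_ofFn, List.prod_ofFn] using List.norm_prod_le (List.ofFn (N ∘ w))
      _ ≤ Fintype.card m * ∏ k, b (w k) := by
          gcongr with k
          exact hN (w k)
  simp only [sum_smul_pow_eq_sum_prod_smul_prod, sum_mul_pow_eq_sum_prod_mul_prod, trace_sum,
    trace_smul, smul_eq_mul]
  rw [Finset.sum_comm, Finset.sum_comm (γ := S), Finset.mul_sum]
  refine Finset.sum_le_sum fun w _ => ?_
  rw [← Finset.sum_mul, ← Finset.sum_mul, mul_left_comm]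
  exact mul_le_mul_of_nonneg_left (hword w) (hc w)

theorem natCast_mul_two_mul_pow_le_hundred_mul_log_pow {d P : ℕ} {S : ℝ} (hd : 0 < d) (hP : 0 < P)
    (hP₁ : Real.log d ≤ P) (hP₂ : P ≤ 2 * Real.log d) (hS : 0 ≤ S) :
    d * (2 * (2 * Real.exp 1 * P * S) ^ P) ≤ (100 * Real.log d * S) ^ P := by
  have hdexp : (d : ℝ) ≤ Real.exp 1 ^ P := by
    rw [Real.exp_one_pow, ← Real.exp_log (Nat.cast_pos.2 hd)]
    exact Real.exp_le_exp.2 hP₁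
  have h2 : (2 : ℝ) ≤ 2 ^ P := le_self_pow₀ one_le_two hP.ne'
  have he : Real.exp 1 < 2.7182818286 := Real.exp_one_lt_d9
  calc (d : ℝ) * (2 * (2 * Real.exp 1 * P * S) ^ P)
      ≤ Real.exp 1 ^ P * (2 ^ P * (2 * Real.exp 1 * P * S) ^ P) := by gcongr
    _ = (Real.exp 1 * (2 * (2 * Real.exp 1 * P * S))) ^ P := by rw [← mul_pow, ← mul_pow]
    _ ≤ (100 * Real.log d * S) ^ P := by
      refine pow_le_pow_left₀ (by positivity) ?_ P
      have he2 : Real.exp 1 * Real.exp 1 ≤ 7.4 := by nlinarith [Real.exp_pos 1]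
      have hLS : (P : ℝ) * S ≤ 2 * (Real.log d * S) := by nlinarith
      have hLS₀ : 0 ≤ Real.log d * S := by nlinarith [Nat.cast_nonneg (α := ℝ) P]
      calc Real.exp 1 * (2 * (2 * Real.exp 1 * P * S))
          = 4 * (Real.exp 1 * Real.exp 1) * (P * S) := by ring
        _ ≤ 4 * 7.4 * (2 * (Real.log d * S)) := by gcongr
        _ ≤ 100 * Real.log d * S := by nlinarith

def boolSign (b : Bool) : ℝ := if b then 1 else -1

@[simp] theorem boolSign_true : boolSign true = 1 := rfl

@[simp] theorem boolSign_false : boolSign false = -1 := rfl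

section Rademacher

variable {ι : Type*} [Fintype ι] [DecidableEq ι]

theorem sum_prod_boolSign_comp_nonneg {κ : Type*} [Fintype κ] (h : κ → ι) :
    0 ≤ ∑ σ : ι → Bool, ∏ k, boolSign (σ (h k)) := by
  have hfiber (σ : ι → Bool) :
      ∏ k, boolSign (σ (h k)) = ∏ i, boolSign (σ i) ^ #{k | h k = i} := by
    rw [← Finset.prod_fiberwise univ h]
    refine Finset.prod_congr rfl fun i _ => ?_
    rw [← Finset.prod_const]
    exact Finset.prod_congr rfl fun k hk => by rw [(Finset.mem_filter.1 hk).2]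
  simp only [hfiber]
  rw [← Fintype.prod_sum fun i b => boolSign b ^ #{k | h k = i}]
  refine Finset.prod_nonneg fun i _ => ?_
  simp only [Fintype.sum_bool, boolSign_true, boolSign_false, one_pow]
  rcases Nat.even_or_odd #{k | h k = i} with he | ho
  · simp [he.neg_one_pow]
  · simp [ho.neg_one_pow]

theorem sum_exp_sum_boolSign_mul_le (a : ι → ℝ) :
    ∑ σ : ι → Bool, Real.exp (∑ i, boolSign (σ i) * a i)
      ≤ 2 ^ Fintype.card ι * Real.exp ((∑ i, a i ^ 2) / 2) := by
  simp only [Real.exp_sum]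
  rw [← Fintype.prod_sum fun i b => Real.exp (boolSign b * a i), Finset.sum_div, Real.exp_sum,
    ← Finset.card_univ, ← Finset.prod_const, ← Finset.prod_mul_distrib]
  refine Finset.prod_le_prod (fun i _ => by positivity) fun i _ => ?_
  have := Real.cosh_le_exp_half_sq (a i)
  simp only [Fintype.sum_bool, boolSign_true, boolSign_false, one_mul, neg_one_mul,
    Real.cosh_eq] at this ⊢
  linarith

theorem even_pow_le_factorial_mul_exp_add_exp_neg (y : ℝ) (m : ℕ) :
    y ^ (2 * m) ≤ (2 * m)! * (Real.exp y + Real.exp (-y)) := by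
  have hexp : Real.exp |y| ≤ Real.exp y + Real.exp (-y) := by
    rcases abs_cases y with ⟨h, -⟩ | ⟨h, -⟩ <;> rw [h] <;>
      linarith [Real.exp_pos y, Real.exp_pos (-y)]
  calc y ^ (2 * m) = |y| ^ (2 * m) := by rw [pow_mul, pow_mul, sq_abs]
    _ ≤ (2 * m)! * Real.exp |y| := by
      rw [← div_le_iff₀' (by positivity)]
      exact Real.pow_div_factorial_le_exp _ (abs_nonneg y) _
    _ ≤ (2 * m)! * (Real.exp y + Real.exp (-y)) := by gcongr

theorem pow_mul_sum_sum_boolSign_mul_pow_le (a : ι → ℝ) (t : ℝ) (m : ℕ) :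
    t ^ (2 * m) * ∑ σ : ι → Bool, (∑ i, boolSign (σ i) * a i) ^ (2 * m)
      ≤ (2 * m)! * (2 * (2 ^ Fintype.card ι * Real.exp (t ^ 2 * (∑ i, a i ^ 2) / 2))) := by
  have hmgf (s : ℝ) (hs : s ^ 2 = t ^ 2) :
      ∑ σ : ι → Bool, Real.exp (s * ∑ i, boolSign (σ i) * a i)
        ≤ 2 ^ Fintype.card ι * Real.exp (t ^ 2 * (∑ i, a i ^ 2) / 2) := by
    convert sum_exp_sum_boolSign_mul_le (fun i => s * a i) using 3 with σ
    · simp only [Finset.mul_sum, mul_left_comm]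
    · simp only [mul_pow, ← Finset.mul_sum, hs]
  calc t ^ (2 * m) * ∑ σ : ι → Bool, (∑ i, boolSign (σ i) * a i) ^ (2 * m)
      = ∑ σ : ι → Bool, (t * ∑ i, boolSign (σ i) * a i) ^ (2 * m) := by
        rw [Finset.mul_sum]
        simp only [mul_pow]
    _ ≤ ∑ σ : ι → Bool, (2 * m)! * (Real.exp (t * ∑ i, boolSign (σ i) * a i)
          + Real.exp (-t * ∑ i, boolSign (σ i) * a i)) := by
        gcongr with σ
        rw [neg_mul]
        exact even_pow_le_factorial_mul_exp_add_exp_neg _ m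
    _ ≤ (2 * m)! * (2 * (2 ^ Fintype.card ι * Real.exp (t ^ 2 * (∑ i, a i ^ 2) / 2))) := by
        rw [← Finset.mul_sum, Finset.sum_add_distrib]
        gcongr
        exact (add_le_add (hmgf t rfl) (hmgf (-t) (neg_sq t))).trans_eq (two_mul _).symm

theorem sum_sum_boolSign_mul_pow_le (a : ι → ℝ) {m : ℕ} (hm : 0 < m) :
    ∑ σ : ι → Bool, (∑ i, boolSign (σ i) * a i) ^ (2 * m)
      ≤ 2 ^ Fintype.card ι * (2 * (2 * Real.exp 1 * m * ∑ i, a i ^ 2) ^ m) := by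
  set S := ∑ i, a i ^ 2
  rcases (show 0 ≤ S by positivity).eq_or_lt with hS | hS
  · have ha (i : ι) : a i = 0 := by
      have := (Finset.sum_eq_zero_iff_of_nonneg fun i _ => sq_nonneg (a i)).1 hS.symm i
        (mem_univ i)
      exact pow_eq_zero_iff two_ne_zero |>.1 this
    simp [ha, hm.ne', ← hS]
  -- `t` minimises `t ^ (-2m) * exp (t² S / 2)`.
  set t := √(2 * m / S)
  have ht : 0 < t := Real.sqrt_pos.2 (by positivity)
  have ht2 : t ^ 2 = 2 * m / S := Real.sq_sqrt (by positivity)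
  have hmoment := pow_mul_sum_sum_boolSign_mul_pow_le a t m
  rw [ht2, div_mul_cancel₀ _ hS.ne', mul_div_cancel_left₀ _ two_ne_zero] at hmoment
  have hfact : ((2 * m)! : ℝ) ≤ (2 * m) ^ m * (2 * m) ^ m := by
    rw [← pow_add, ← two_mul]
    exact_mod_cast Nat.factorial_le_pow (2 * m)
  calc ∑ σ : ι → Bool, (∑ i, boolSign (σ i) * a i) ^ (2 * m)
      ≤ (2 * m)! * (2 * (2 ^ Fintype.card ι * Real.exp m)) / t ^ (2 * m) :=
        (le_div_iff₀' (by positivity)).2 hmoment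
    _ ≤ (2 * m) ^ m * (2 * m) ^ m * (2 * (2 ^ Fintype.card ι * Real.exp m)) / (2 * m / S) ^ m := by
        rw [pow_mul, ht2]
        gcongr
    _ = 2 ^ Fintype.card ι * (2 * (2 * Real.exp 1 * m * S) ^ m) := by
        rw [← Real.exp_one_pow, div_pow]
        field_simp [hS.ne']
        ring

theorem sum_l2_opNorm_sum_boolSign_smul_pow_le {m : Type*} [Fintype m] [DecidableEq m]
    [Nonempty m] (A : ι → Matrix m m ℝ) (k : ℕ) :
    ∑ σ : ι → Bool, ‖∑ i, boolSign (σ i) • A i‖ ^ (2 * 2 ^ k) ≤ Fintype.card m *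
      (2 ^ Fintype.card ι * (2 * (2 * Real.exp 1 * 2 ^ k * ∑ i, ‖A i‖ ^ 2) ^ 2 ^ k)) := by
  set c : (ι → Bool) → ι × ι → ℝ := fun σ q => boolSign (σ q.1) * boolSign (σ q.2)
  have hgram (σ : ι → Bool) : (∑ i, boolSign (σ i) • A i)ᴴ * ∑ i, boolSign (σ i) • A i
      = ∑ q, c σ q • ((A q.1)ᴴ * A q.2) := by
    simp only [conjTranspose_sum, conjTranspose_smul, star_trivial, Finset.sum_mul_sum,
      ← Fintype.sum_prod_type', smul_mul_smul_comm, c]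
  have hsq (σ : ι → Bool) : (∑ i, boolSign (σ i) * ‖A i‖) ^ 2
      = ∑ q, c σ q * (‖A q.1‖ * ‖A q.2‖) := by
    simp only [sq, Finset.sum_mul_sum, ← Fintype.sum_prod_type', c]
    exact Finset.sum_congr rfl fun q _ => by ring
  have hN (q : ι × ι) : ‖(A q.1)ᴴ * A q.2‖ ≤ ‖A q.1‖ * ‖A q.2‖ :=
    (norm_mul_le _ _).trans_eq (by rw [l2_opNorm_conjTranspose])
  have hc (w : Fin (2 ^ k) → ι × ι) : 0 ≤ ∑ σ, ∏ j, c σ (w j) := by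
    simpa [Fintype.prod_sum_type, Finset.prod_mul_distrib, c] using
      sum_prod_boolSign_comp_nonneg (Sum.elim (fun j => (w j).1) (fun j => (w j).2))
  calc ∑ σ : ι → Bool, ‖∑ i, boolSign (σ i) • A i‖ ^ (2 * 2 ^ k)
      ≤ ∑ σ : ι → Bool, trace ((∑ q, c σ q • ((A q.1)ᴴ * A q.2)) ^ 2 ^ k) := by
        gcongr with σ
        rw [← hgram]
        exact l2_opNorm_pow_le_trace_pow _ k
    _ ≤ Fintype.card m * ∑ σ : ι → Bool, (∑ i, boolSign (σ i) * ‖A i‖) ^ (2 * 2 ^ k) := by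
        simp only [pow_mul, hsq]
        exact sum_trace_sum_smul_pow_le c _ _ _ hN hc
    _ ≤ _ := by
        gcongr
        exact_mod_cast sum_sum_boolSign_mul_pow_le _ (Nat.two_pow_pos k)

theorem mean_l2_opNorm_sum_boolSign_smul_pow_le {m : Type*} [Fintype m] [DecidableEq m]
    [Nonempty m] (A : ι → Matrix m m ℝ) {k : ℕ} (hk₁ : Real.log (Fintype.card m) ≤ 2 ^ k)
    (hk₂ : (2 : ℝ) ^ k ≤ 2 * Real.log (Fintype.card m)) :
    (1 / 2 ^ Fintype.card ι : ℝ) * ∑ σ : ι → Bool, ‖∑ i, boolSign (σ i) • A i‖ ^ (2 * 2 ^ k)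
      ≤ (100 * Real.log (Fintype.card m) * ∑ i, ‖A i‖ ^ 2) ^ 2 ^ k := by
  have hnum := natCast_mul_two_mul_pow_le_hundred_mul_log_pow (P := 2 ^ k) Fintype.card_pos
    (Nat.two_pow_pos k) (by exact_mod_cast hk₁) (by exact_mod_cast hk₂)
    (by positivity : 0 ≤ ∑ i, ‖A i‖ ^ 2)
  push_cast at hnum
  calc (1 / 2 ^ Fintype.card ι : ℝ) * ∑ σ : ι → Bool, ‖∑ i, boolSign (σ i) • A i‖ ^ (2 * 2 ^ k)
      ≤ (1 / 2 ^ Fintype.card ι : ℝ) * (Fintype.card m * (2 ^ Fintype.card ι *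
          (2 * (2 * Real.exp 1 * 2 ^ k * ∑ i, ‖A i‖ ^ 2) ^ 2 ^ k))) := by
        gcongr
        exact sum_l2_opNorm_sum_boolSign_smul_pow_le A k
    _ = Fintype.card m * (2 * (2 * Real.exp 1 * 2 ^ k * ∑ i, ‖A i‖ ^ 2) ^ 2 ^ k) := by
        field_simp
    _ ≤ _ := hnum

end Rademacher

theorem noncommutative_khintchine_general (n d : ℕ) (hd : 2 ≤ d)
    (A : Fin n → Matrix (Fin d) (Fin d) ℝ) :
    (1 / 2 ^ n : ℝ) *
        ∑ σ : Fin n → Bool,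
          specNorm (∑ i, (if σ i then (1 : ℝ) else -1) • A i) ≤
      10 * Real.sqrt (Real.log d) * Real.sqrt (∑ i, specNorm (A i) ^ 2) := by
  have : NeZero d := ⟨by omega⟩
  have hL : 1 ≤ 2 * Real.log d := by
    have := Real.log_le_log two_pos (Nat.ofNat_le_cast.2 hd)
    linarith [Real.log_two_gt_d9]
  obtain ⟨k, hk₁, hk₂⟩ := exists_nat_pow_near hL one_lt_two
  have hmoment := mean_l2_opNorm_sum_boolSign_smul_pow_le A (k := k)
    (by rw [Fintype.card_fin]; linarith [pow_succ (2 : ℝ) k]) (by rwa [Fintype.card_fin])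
  rw [Fintype.card_fin, Fintype.card_fin] at hmoment
  simp only [specNorm_eq_l2_opNorm]
  change (1 / 2 ^ n : ℝ) * ∑ σ : Fin n → Bool, ‖∑ i, boolSign (σ i) • A i‖ ≤ _
  have hjensen := Real.pow_arith_mean_le_arith_mean_pow_of_even univ (fun _ => (1 / 2 ^ n : ℝ))
    (fun σ : Fin n → Bool => ‖∑ i, boolSign (σ i) • A i‖) (fun _ _ => by positivity)
    (by simp) (even_two_mul (2 ^ k))
  refine le_of_pow_le_pow_left₀ (by positivity : 2 * 2 ^ k ≠ 0) (by positivity) ?_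
  calc ((1 / 2 ^ n : ℝ) * ∑ σ : Fin n → Bool, ‖∑ i, boolSign (σ i) • A i‖) ^ (2 * 2 ^ k)
      ≤ (1 / 2 ^ n : ℝ) * ∑ σ : Fin n → Bool, ‖∑ i, boolSign (σ i) • A i‖ ^ (2 * 2 ^ k) := by
        simpa only [Finset.mul_sum] using hjensen
    _ ≤ (100 * Real.log d * ∑ i, ‖A i‖ ^ 2) ^ 2 ^ k := hmoment
    _ = (10 * √(Real.log d) * √(∑ i, ‖A i‖ ^ 2)) ^ (2 * 2 ^ k) := by
        rw [pow_mul]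
        congr 1
        rw [mul_pow, mul_pow, Real.sq_sqrt (by linarith), Real.sq_sqrt (by positivity)]
        norm_num

/-- Non-commutative Khintchine inequality (Theorem 3):
`𝔼_σ ‖∑ σ_i A_i‖₂ ≤ 10 √(log d) (∑ ‖A_i‖₂²)^{1/2}`. -/
theorem noncommutative_khintchine (n d : ℕ) (hn : 1 ≤ n) (hd : 2 ≤ d)
    (A : Fin n → Matrix (Fin d) (Fin d) ℝ) :
    (1 / 2 ^ n : ℝ) *
        ∑ σ : Fin n → Bool,
          specNorm (∑ i, (if σ i then (1 : ℝ) else -1) • A i) ≤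
      10 * Real.sqrt (Real.log d) * Real.sqrt (∑ i, specNorm (A i) ^ 2) :=
  noncommutative_khintchine_general n d hd A
end

section
/- Let G be a finite abelian group of order N, let k ≥ 2 be an integer, let c > 0, and let m be an integer with m ≥ 2/c². Suppose that E_{D∈G^m} E_{σ∈{−1,1}^m} [ max_{Z∈{−1,1}^G} | (1/(mN)) Σ_{i=1}^m Σ_{x∈G} σᵢ Π_{ℓ=0}^{k−1} Z(x + ℓ·dᵢ) | ] ≥ c. Then there exist disjoint sets L, R with L ∪ R = [m] such that E_{D∈G^m} E_{σ∈{−1,1}^L, τ∈{−1,1}^R} [ max_{Z∈{−1,1}^G} Σ_{i∈L} Σ_{j∈R} Σ_{x∈G} σᵢ τⱼ Π_{ℓ=1}^{k−1} Z(x + ℓ·dᵢ)·Z(x + ℓ·dⱼ) ] ≥ c²·m²·N/8. -/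
open Finset

/-- The sign `±1` associated with a boolean. -/
def sg (b : Bool) : ℝ := if b then 1 else -1

namespace CST
lemma sg_not (b : Bool) : sg (!b) = - sg b := by cases b <;> norm_num [sg]
def flip' {m : ℕ} (i : Fin m) : (Fin m → Bool) ≃ (Fin m → Bool) :=
  Function.Involutive.toPerm (fun s => Function.update s i (!(s i)))
    (by intro s; funext j; by_cases hj : j = i
        · subst hj; simp
        · simp [Function.update_of_ne hj])
lemma sum_flip_zero {m : ℕ} (i : Fin m) (f : (Fin m → Bool) → ℝ)
    (hf : ∀ s, f (Function.update s i (!(s i))) = - f s) :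
    ∑ s : Fin m → Bool, f s = 0 := by
  have h1 : ∑ s : Fin m → Bool, f s = ∑ s : Fin m → Bool, f (flip' i s) :=
    (Equiv.sum_comp (flip' i) f).symm
  simp only [show ∀ s, flip' i s = Function.update s i (!(s i)) from fun _ => rfl, hf] at h1
  rw [Finset.sum_neg_distrib] at h1
  linarith
lemma sum_sg_single {m : ℕ} (i : Fin m) : ∑ s : Fin m → Bool, sg (s i) = 0 := by
  apply sum_flip_zero i
  intro s; rw [Function.update_self, sg_not]
lemma sum_sg_pair {m : ℕ} {i j : Fin m} (hij : i ≠ j) :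
    ∑ s : Fin m → Bool, sg (s i) * sg (s j) = 0 := by
  apply sum_flip_zero i
  intro s
  rw [Function.update_self, Function.update_of_ne (Ne.symm hij), sg_not]
  ring

lemma indT (b : Bool) : (if b then (1:ℝ) else 0) = (1 + sg b)/2 := by cases b <;> norm_num [sg]
lemma indF (b : Bool) : (if b then (0:ℝ) else 1) = (1 - sg b)/2 := by cases b <;> norm_num [sg]

lemma count_TF {m : ℕ} {i j : Fin m} (hij : i ≠ j) :
    ∑ s : Fin m → Bool, (if s i then (1:ℝ) else 0) * (if s j then (0:ℝ) else 1)
      = 2^m / 4 := by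
  have key : ∀ s : Fin m → Bool,
      (if s i then (1:ℝ) else 0) * (if s j then (0:ℝ) else 1)
        = (1 + sg (s i) - sg (s j) - sg (s i) * sg (s j)) / 4 := by
    intro s; rw [indT, indF]; ring
  simp only [key]
  have e1 := sum_sg_single (m:=m) i
  have e2 := sum_sg_single (m:=m) j
  have e3 := sum_sg_pair hij
  have e4 : ∑ _s : Fin m → Bool, (1:ℝ) = 2^m := by
    simp [Finset.card_univ, Fintype.card_fun]
  have expand : ∑ s : Fin m → Bool, (1 + sg (s i) - sg (s j) - sg (s i) * sg (s j)) / 4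
      = ((∑ _s : Fin m → Bool, (1:ℝ)) + (∑ s : Fin m → Bool, sg (s i))
        - (∑ s : Fin m → Bool, sg (s j)) - (∑ s : Fin m → Bool, sg (s i) * sg (s j))) / 4 := by
    rw [← Finset.sum_add_distrib, ← Finset.sum_sub_distrib, ← Finset.sum_sub_distrib,
      ← Finset.sum_div]
  rw [expand, e1, e2, e3, e4]; ring

end CST

namespace CST2
open CST

lemma partition_avg {m : ℕ} (t : Fin m → Fin m → ℝ) :
    ∑ p : Fin m → Bool,
        ∑ i ∈ Finset.univ.filter (fun i => p i = true),
          ∑ j ∈ Finset.univ.filter (fun j => p j = false), t i j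
      = 2^m/4 * ((∑ i, ∑ j, t i j) - ∑ i, t i i) := by
  have step1 : ∀ p : Fin m → Bool,
      (∑ i ∈ Finset.univ.filter (fun i => p i = true),
        ∑ j ∈ Finset.univ.filter (fun j => p j = false), t i j)
      = ∑ i, ∑ j, ((if p i then (1:ℝ) else 0) * (if p j then (0:ℝ) else 1)) * t i j := by
    intro p
    rw [Finset.sum_filter]
    apply Finset.sum_congr rfl
    intro i _
    cases hpi : p i
    · simp
    · simp only [if_pos rfl, one_mul]
      rw [Finset.sum_filter]
      apply Finset.sum_congr rfl
      intro j _
      cases hpj : p j <;> simp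
  simp only [step1]
  rw [Finset.sum_comm]
  have swap2 : ∀ i : Fin m, ∑ p : Fin m → Bool, ∑ j,
      ((if p i then (1:ℝ) else 0) * (if p j then (0:ℝ) else 1)) * t i j
      = ∑ j, (∑ p : Fin m → Bool, (if p i then (1:ℝ) else 0) * (if p j then (0:ℝ) else 1)) * t i j := by
    intro i
    rw [Finset.sum_comm]
    exact Finset.sum_congr rfl fun j _ => by rw [← Finset.sum_mul]
  simp only [swap2]
  have count : ∀ i j : Fin m,
      (∑ p : Fin m → Bool, (if p i then (1:ℝ) else 0) * (if p j then (0:ℝ) else 1))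
      = if i = j then 0 else 2^m/4 := by
    intro i j
    by_cases hij : i = j
    · subst hij; simp only [if_pos rfl]
      apply Finset.sum_eq_zero
      intro p _
      cases hp : p i <;> simp
    · rw [if_neg hij]; exact count_TF hij
  simp only [count]
  have inner : ∀ i : Fin m, ∑ j, (if i = j then (0:ℝ) else 2^m/4) * t i j
      = 2^m/4 * ((∑ j, t i j) - t i i) := by
    intro i
    have : ∀ j, (if i = j then (0:ℝ) else 2^m/4) * t i j
        = 2^m/4 * t i j - (if i = j then 2^m/4 * t i j else 0) := by
      intro j; by_cases hij : i = j <;> simp [hij]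
    simp only [this]
    rw [Finset.sum_sub_distrib, Finset.sum_ite_eq, if_pos (Finset.mem_univ i), mul_sub,
      Finset.mul_sum]
  simp only [inner]
  rw [← Finset.mul_sum, Finset.sum_sub_distrib]

end CST2

namespace CST3
open CST

lemma sg_sq (b : Bool) : sg b ^ 2 = 1 := by cases b <;> norm_num [sg]
lemma sg_mul_self (b : Bool) : sg b * sg b = 1 := by cases b <;> norm_num [sg]

variable {G : Type*} [AddCommGroup G] [Fintype G] [DecidableEq G]

def gfun (k : ℕ) (Z : G → Bool) (d x : G) : ℝ :=
  ∏ ℓ ∈ Finset.Icc 1 (k-1), sg (Z (x + ℓ • d))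

lemma gfun_sq (k : ℕ) (Z : G → Bool) (d x : G) : gfun k Z d x * gfun k Z d x = 1 := by
  rw [gfun, ← Finset.prod_mul_distrib]
  exact Finset.prod_eq_one fun ℓ _ => sg_mul_self _

lemma prod_range_eq (k : ℕ) (hk : 1 ≤ k) (Z : G → Bool) (d x : G) :
    ∏ ℓ ∈ Finset.range k, sg (Z (x + ℓ • d)) = sg (Z x) * gfun k Z d x := by
  have hins : Finset.range k = insert 0 (Finset.Icc 1 (k-1)) := by
    ext ℓ; simp only [Finset.mem_range, Finset.mem_insert, Finset.mem_Icc]; omega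
  rw [hins, Finset.prod_insert (by simp), gfun]
  simp

lemma diag_sum (k m : ℕ) (D : Fin m → G) (σ : Fin m → Bool) (Z : G → Bool) :
    ∑ i : Fin m, sg (σ i) * sg (σ i) * ∑ x : G, gfun k Z (D i) x * gfun k Z (D i) x
      = (m : ℝ) * (Fintype.card G : ℝ) := by
  have : ∀ i : Fin m, sg (σ i) * sg (σ i) * ∑ x : G, gfun k Z (D i) x * gfun k Z (D i) x
      = (Fintype.card G : ℝ) := by
    intro i
    rw [sg_mul_self, one_mul]
    rw [Finset.sum_congr rfl fun x _ => gfun_sq k Z (D i) x]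
    simp
  rw [Finset.sum_congr rfl fun i _ => this i]
  simp [mul_comm]

lemma cs_step (k m : ℕ) (hk : 1 ≤ k) (D : Fin m → G) (σ : Fin m → Bool) (Z : G → Bool) :
    (∑ i, ∑ x : G, sg (σ i) * ∏ ℓ ∈ Finset.range k, sg (Z (x + ℓ • D i)))^2
      ≤ (Fintype.card G : ℝ) *
        ∑ i, ∑ j, sg (σ i) * sg (σ j) * ∑ x : G, gfun k Z (D i) x * gfun k Z (D j) x := by
  set h : G → ℝ := fun x => ∑ i, sg (σ i) * gfun k Z (D i) x with hh
  have hS : (∑ i, ∑ x : G, sg (σ i) * ∏ ℓ ∈ Finset.range k, sg (Z (x + ℓ • D i)))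
      = ∑ x : G, sg (Z x) * h x := by
    rw [Finset.sum_comm]
    refine Finset.sum_congr rfl fun x _ => ?_
    rw [hh, Finset.mul_sum]
    refine Finset.sum_congr rfl fun i _ => ?_
    rw [prod_range_eq k hk]; ring
  have hsq : ∑ x : G, h x ^ 2
      = ∑ i, ∑ j, sg (σ i) * sg (σ j) * ∑ x : G, gfun k Z (D i) x * gfun k Z (D j) x := by
    have hx : ∀ x : G, h x ^ 2 = ∑ i, ∑ j,
        (sg (σ i) * gfun k Z (D i) x) * (sg (σ j) * gfun k Z (D j) x) := by
      intro x; rw [pow_two, hh, Finset.sum_mul_sum]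
    rw [Finset.sum_congr rfl fun x _ => hx x, Finset.sum_comm]
    refine Finset.sum_congr rfl fun i _ => ?_
    rw [Finset.sum_comm]
    refine Finset.sum_congr rfl fun j _ => ?_
    rw [Finset.mul_sum]
    refine Finset.sum_congr rfl fun x _ => ?_
    ring
  rw [hS, ← hsq]
  calc (∑ x : G, sg (Z x) * h x)^2
      ≤ (∑ x : G, sg (Z x) ^ 2) * ∑ x : G, h x ^ 2 :=
        Finset.sum_mul_sq_le_sq_mul_sq _ _ _
    _ = (Fintype.card G : ℝ) * ∑ x : G, h x ^ 2 := by
        rw [Finset.sum_congr rfl fun x _ => sg_sq (Z x)]; simp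

end CST3

namespace CST4

def splitEquiv {α : Type*} [Fintype α] [DecidableEq α] (L R : Finset α)
    (hLR : ∀ i, i ∈ R ↔ i ∉ L) :
    (α → Bool) ≃ ((↥L → Bool) × (↥R → Bool)) where
  toFun s := (fun i => s i.1, fun j => s j.1)
  invFun p i := if h : i ∈ L then p.1 ⟨i, h⟩ else p.2 ⟨i, (hLR i).2 h⟩
  left_inv s := by
    funext i
    by_cases h : i ∈ L <;> simp [h]
  right_inv p := by
    refine Prod.ext ?_ ?_ <;> funext i
    · exact dif_pos i.2
    · have h : ¬ (i.1 ∈ L) := (hLR i.1).1 i.2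
      simp [h]

lemma split_sum {α : Type*} [Fintype α] [DecidableEq α] (L R : Finset α)
    (hLR : ∀ i, i ∈ R ↔ i ∉ L) (Φ : (↥L → Bool) → (↥R → Bool) → ℝ) :
    ∑ s : α → Bool, Φ (fun i => s i.1) (fun j => s j.1)
      = ∑ σ : ↥L → Bool, ∑ τ : ↥R → Bool, Φ σ τ := by
  calc ∑ s : α → Bool, Φ (fun i => s i.1) (fun j => s j.1)
      = ∑ q : (↥L → Bool) × (↥R → Bool), Φ q.1 q.2 :=
        Fintype.sum_equiv (splitEquiv L R hLR) _ _ (fun s => rfl)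
    _ = ∑ σ : ↥L → Bool, ∑ τ : ↥R → Bool, Φ σ τ := Fintype.sum_prod_type (f := fun q => Φ q.1 q.2)

lemma card_split {α : Type*} [Fintype α] [DecidableEq α] (L R : Finset α)
    (hLR : ∀ i, i ∈ R ↔ i ∉ L) : L.card + R.card = Fintype.card α := by
  have : R = Lᶜ := by ext i; simp [hLR, Finset.mem_compl]
  rw [this]
  exact Finset.card_add_card_compl L

end CST4

namespace CSTmain
open CST CST2 CST3 CST4

variable {G : Type*} [AddCommGroup G] [Fintype G] [DecidableEq G]

noncomputable def Sf (k m : ℕ) (D : Fin m → G) (σ : Fin m → Bool) (Z : G → Bool) : ℝ :=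
  ∑ i, ∑ x : G, sg (σ i) * ∏ ℓ ∈ Finset.range k, sg (Z (x + ℓ • D i))

noncomputable def Af (k m : ℕ) (D : Fin m → G) (σ : Fin m → Bool) : ℝ :=
  ⨆ Z : G → Bool, |(1 / ((m : ℝ) * (Fintype.card G : ℝ))) * Sf k m D σ Z|

noncomputable def Bl (k m : ℕ) (Z : G → Bool) (D : Fin m → G) (i j : Fin m) : ℝ :=
  ∑ x : G, gfun k Z (D i) x * gfun k Z (D j) x

noncomputable def tt (k m : ℕ) (D : Fin m → G) (σ : Fin m → Bool) (Z : G → Bool) (i j : Fin m) : ℝ :=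
  sg (σ i) * sg (σ j) * Bl k m Z D i j

noncomputable def U (k m : ℕ) (p : Fin m → Bool) (D : Fin m → G) (σ : Fin m → Bool) (Z : G → Bool) : ℝ :=
  ∑ i ∈ Finset.univ.filter (fun i => p i = true),
    ∑ j ∈ Finset.univ.filter (fun j => p j = false), tt k m D σ Z i j

noncomputable def P (k m : ℕ) (p : Fin m → Bool) : ℝ :=
  (1 / (Fintype.card G : ℝ) ^ m) * ∑ D : Fin m → G, (1 / 2 ^ m : ℝ) *
    ∑ σ : Fin m → Bool, ⨆ Z : G → Bool, U k m p D σ Z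

lemma M1 (k m : ℕ) (hk : 1 ≤ k) (hm0 : (0:ℝ) < m) (D : Fin m → G) (σ : Fin m → Bool) :
    2^m/4 * ((m:ℝ)^2 * (Fintype.card G : ℝ) * (Af k m D σ)^2 - (m:ℝ) * (Fintype.card G : ℝ))
      ≤ ∑ p : Fin m → Bool, ⨆ Z : G → Bool, U k m p D σ Z := by
  have hne : Nonempty G := ⟨0⟩
  set N := (Fintype.card G : ℝ) with hNdef
  have hN : (0:ℝ) < N := by
    simp only [hNdef]
    exact_mod_cast Fintype.card_pos
  obtain ⟨Z0, hZ0⟩ := Finite.exists_max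
    (fun Z : G → Bool => |(1 / ((m:ℝ) * N)) * Sf k m D σ Z|)
  have hA : Af k m D σ = |(1 / ((m:ℝ) * N)) * Sf k m D σ Z0| := by
    have hAeq : Af k m D σ = ⨆ Z : G → Bool, |(1 / ((m:ℝ) * N)) * Sf k m D σ Z| := rfl
    rw [hAeq]
    exact le_antisymm (ciSup_le hZ0)
      (le_ciSup (f := fun Z : G → Bool => |(1 / ((m:ℝ) * N)) * Sf k m D σ Z|)
        ((Set.finite_range _).bddAbove) Z0)
  have hcs : (Sf k m D σ Z0)^2 ≤ N * ∑ i, ∑ j, tt k m D σ Z0 i j := by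
    simpa [Sf, tt, Bl] using cs_step k m hk D σ Z0
  have hmN : (0:ℝ) < (m:ℝ) * N := by positivity
  have hAS : (m:ℝ) * N * Af k m D σ = |Sf k m D σ Z0| := by
    rw [hA, abs_mul, abs_of_nonneg (by positivity : (0:ℝ) ≤ 1 / ((m:ℝ)*N))]
    field_simp
  have hsq : (m:ℝ)^2 * N^2 * (Af k m D σ)^2 = (Sf k m D σ Z0)^2 := by
    have : ((m:ℝ) * N * Af k m D σ)^2 = |Sf k m D σ Z0|^2 := by rw [hAS]
    rw [sq_abs] at this
    nlinarith [this]
  have hTall : (m:ℝ)^2 * N * (Af k m D σ)^2 ≤ ∑ i, ∑ j, tt k m D σ Z0 i j := by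
    nlinarith [hcs, hsq, hN]
  have hdiag : ∑ i, tt k m D σ Z0 i i = (m:ℝ) * N := by
    simpa [tt, Bl] using diag_sum k m D σ Z0
  have hpart : ∑ p : Fin m → Bool, U k m p D σ Z0
      = 2^m/4 * ((∑ i, ∑ j, tt k m D σ Z0 i j) - (m:ℝ) * N) := by
    rw [show (∑ p : Fin m → Bool, U k m p D σ Z0)
        = ∑ p : Fin m → Bool, ∑ i ∈ Finset.univ.filter (fun i => p i = true),
            ∑ j ∈ Finset.univ.filter (fun j => p j = false), tt k m D σ Z0 i j from rfl,
      partition_avg, hdiag]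
  have hle : ∑ p : Fin m → Bool, U k m p D σ Z0
      ≤ ∑ p : Fin m → Bool, ⨆ Z : G → Bool, U k m p D σ Z :=
    Finset.sum_le_sum fun p _ =>
      le_ciSup (f := fun Z : G → Bool => U k m p D σ Z) ((Set.finite_range _).bddAbove) Z0
  have hmono : 2^m/4 * ((m:ℝ)^2 * N * (Af k m D σ)^2 - (m:ℝ) * N)
      ≤ 2^m/4 * ((∑ i, ∑ j, tt k m D σ Z0 i j) - (m:ℝ) * N) := by
    apply mul_le_mul_of_nonneg_left _ (by positivity)
    linarith
  calc 2^m/4 * ((m:ℝ)^2 * N * (Af k m D σ)^2 - (m:ℝ) * N)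
      ≤ 2^m/4 * ((∑ i, ∑ j, tt k m D σ Z0 i j) - (m:ℝ) * N) := hmono
    _ = ∑ p : Fin m → Bool, U k m p D σ Z0 := hpart.symm
    _ ≤ _ := hle


lemma M2 (k m : ℕ) (p : Fin m → Bool) (L R : Finset (Fin m))
    (hL : L = Finset.univ.filter (fun i => p i = true))
    (hR : R = Finset.univ.filter (fun j => p j = false)) :
    (1 / (Fintype.card G : ℝ) ^ m) *
      ∑ D : Fin m → G, (1 / 2 ^ L.card : ℝ) *
        ∑ σ : ↥L → Bool, (1 / 2 ^ R.card : ℝ) *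
          ∑ τ : ↥R → Bool, ⨆ Z : G → Bool,
            ∑ i : ↥L, ∑ j : ↥R, ∑ x : G, sg (σ i) * sg (τ j) *
              ∏ ℓ ∈ Finset.Icc 1 (k - 1),
                (sg (Z (x + ℓ • D i.1)) * sg (Z (x + ℓ • D j.1)))
      = P (G := G) k m p := by
  have hLR : ∀ i, i ∈ R ↔ i ∉ L := by
    intro i; subst hL hR; simp
  have hcard : L.card + R.card = m := by
    have := card_split L R hLR
    simpa using this
  rw [P]
  congr 1
  apply Finset.sum_congr rfl
  intro D _
  -- pull out the 1/2^R.card constant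
  rw [show (∑ σ : ↥L → Bool, (1 / 2 ^ R.card : ℝ) *
        ∑ τ : ↥R → Bool, ⨆ Z : G → Bool,
          ∑ i : ↥L, ∑ j : ↥R, ∑ x : G, sg (σ i) * sg (τ j) *
            ∏ ℓ ∈ Finset.Icc 1 (k - 1),
              (sg (Z (x + ℓ • D i.1)) * sg (Z (x + ℓ • D j.1))))
      = (1 / 2 ^ R.card : ℝ) * ∑ σ : ↥L → Bool, ∑ τ : ↥R → Bool, ⨆ Z : G → Bool,
          ∑ i : ↥L, ∑ j : ↥R, ∑ x : G, sg (σ i) * sg (τ j) *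
            ∏ ℓ ∈ Finset.Icc 1 (k - 1),
              (sg (Z (x + ℓ • D i.1)) * sg (Z (x + ℓ • D j.1)))
      from (Finset.mul_sum _ _ _).symm, ← mul_assoc]
  have hconst : (1 / 2 ^ L.card : ℝ) * (1 / 2 ^ R.card : ℝ) = (1 / 2 ^ m : ℝ) := by
    rw [one_div_mul_one_div, ← pow_add, hcard]
  rw [hconst]
  congr 1
  -- Fubini: double sum over σ, τ becomes sum over full sign vectors
  rw [← split_sum L R hLR (fun σ τ => ⨆ Z : G → Bool,
      ∑ i : ↥L, ∑ j : ↥R, ∑ x : G, sg (σ i) * sg (τ j) *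
        ∏ ℓ ∈ Finset.Icc 1 (k - 1),
          (sg (Z (x + ℓ • D i.1)) * sg (Z (x + ℓ • D j.1))))]
  apply Finset.sum_congr rfl
  intro s _
  congr 1
  funext Z
  -- now identify with U
  have inner : ∀ i j : Fin m,
      (∑ x : G, sg (s i) * sg (s j) *
        ∏ ℓ ∈ Finset.Icc 1 (k - 1),
          (sg (Z (x + ℓ • D i)) * sg (Z (x + ℓ • D j))))
      = tt k m D s Z i j := by
    intro i j
    rw [tt, Bl, Finset.mul_sum]
    apply Finset.sum_congr rfl
    intro x _
    rw [Finset.prod_mul_distrib]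
    rfl
  calc (∑ i : ↥L, ∑ j : ↥R, ∑ x : G, sg (s i.1) * sg (s j.1) *
          ∏ ℓ ∈ Finset.Icc 1 (k - 1),
            (sg (Z (x + ℓ • D i.1)) * sg (Z (x + ℓ • D j.1))))
      = ∑ i ∈ L, ∑ j ∈ R, tt k m D s Z i j := by
        rw [← Finset.sum_coe_sort L]
        apply Finset.sum_congr rfl
        intro i _
        rw [← Finset.sum_coe_sort R]
        apply Finset.sum_congr rfl
        intro j _
        exact inner i.1 j.1
    _ = U k m p D s Z := by rw [U, hL, hR]


lemma NORM (m : ℕ) (X : (Fin m → G) → (Fin m → Bool) → ℝ) :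
    (1 / (Fintype.card G : ℝ) ^ m) * ∑ D : Fin m → G, (1 / 2 ^ m : ℝ) * ∑ σ : Fin m → Bool, X D σ
      = (1 / ((Fintype.card G : ℝ) ^ m * 2 ^ m)) *
          ∑ ω : (Fin m → G) × (Fin m → Bool), X ω.1 ω.2 := by
  rw [← Finset.mul_sum, ← mul_assoc, one_div_mul_one_div]
  congr 1
  exact (Fintype.sum_prod_type (f := fun ω : (Fin m → G) × (Fin m → Bool) => X ω.1 ω.2)).symm

lemma cardOmega (m : ℕ) :
    (Fintype.card ((Fin m → G) × (Fin m → Bool)) : ℝ)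
      = (Fintype.card G : ℝ) ^ m * 2 ^ m := by
  simp [Fintype.card_prod, Fintype.card_fun]

end CSTmain

theorem cauchy_schwarz_trick'
    {G : Type*} [AddCommGroup G] [Fintype G] [DecidableEq G]
    (k m : ℕ) (hk : 2 ≤ k) (c : ℝ) (hc : 0 < c) (hm : 2 / c ^ 2 ≤ (m : ℝ))
    (h : c ≤ (1 / (Fintype.card G : ℝ) ^ m) *
        ∑ D : Fin m → G, (1 / 2 ^ m : ℝ) *
          ∑ σ : Fin m → Bool, ⨆ Z : G → Bool,
            |(1 / ((m : ℝ) * (Fintype.card G : ℝ))) *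
              ∑ i, ∑ x : G, sg (σ i) *
                ∏ ℓ ∈ Finset.range k, sg (Z (x + ℓ • D i))|) :
    ∃ L R : Finset (Fin m), Disjoint L R ∧ L ∪ R = Finset.univ ∧
      c ^ 2 * (m : ℝ) ^ 2 * (Fintype.card G : ℝ) / 8 ≤
        (1 / (Fintype.card G : ℝ) ^ m) *
          ∑ D : Fin m → G, (1 / 2 ^ L.card : ℝ) *
            ∑ σ : ↥L → Bool, (1 / 2 ^ R.card : ℝ) *
              ∑ τ : ↥R → Bool, ⨆ Z : G → Bool,
                ∑ i : ↥L, ∑ j : ↥R, ∑ x : G, sg (σ i) * sg (τ j) *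
                  ∏ ℓ ∈ Finset.Icc 1 (k - 1),
                    (sg (Z (x + ℓ • D i.1)) * sg (Z (x + ℓ • D j.1))) := by
  classical
  have hne : Nonempty G := ⟨0⟩
  have hNpos : (0:ℝ) < (Fintype.card G : ℝ) := by exact_mod_cast Fintype.card_pos
  have hm0 : (0:ℝ) < (m : ℝ) := lt_of_lt_of_le (by positivity) hm
  have hk1 : 1 ≤ k := le_trans (by norm_num) hk
  have hmc : 2 ≤ (m:ℝ) * c ^ 2 := by
    rw [div_le_iff₀ (by positivity)] at hm
    linarith [hm]
  have hK : (0:ℝ) < (Fintype.card G : ℝ) ^ m * 2 ^ m := by positivity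
  -- rewrite hypothesis in terms of Af
  have h1 : c ≤ (1 / (Fintype.card G : ℝ) ^ m) * ∑ D : Fin m → G, (1 / 2 ^ m : ℝ) *
      ∑ σ : Fin m → Bool, CSTmain.Af k m D σ := h
  rw [CSTmain.NORM] at h1
  set SA : ℝ := ∑ ω : (Fin m → G) × (Fin m → Bool), CSTmain.Af k m ω.1 ω.2 with hSAdef
  set SA2 : ℝ := ∑ ω : (Fin m → G) × (Fin m → Bool), (CSTmain.Af k m ω.1 ω.2) ^ 2 with hSA2def
  have hcK : c * ((Fintype.card G : ℝ) ^ m * 2 ^ m) ≤ SA := by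
    rw [one_div, inv_mul_eq_div, le_div_iff₀ hK] at h1
    linarith [h1]
  have hcs2 : SA ^ 2 ≤ ((Fintype.card G : ℝ) ^ m * 2 ^ m) * SA2 := by
    have h0 := sq_sum_le_card_mul_sum_sq
      (s := (Finset.univ : Finset ((Fin m → G) × (Fin m → Bool))))
      (f := fun ω : (Fin m → G) × (Fin m → Bool) => CSTmain.Af k m ω.1 ω.2)
    rw [Finset.card_univ] at h0
    calc SA ^ 2 ≤ (Fintype.card ((Fin m → G) × (Fin m → Bool)) : ℝ) * SA2 := h0
      _ = ((Fintype.card G : ℝ) ^ m * 2 ^ m) * SA2 := by rw [CSTmain.cardOmega]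
  have hSA2 : c ^ 2 * ((Fintype.card G : ℝ) ^ m * 2 ^ m) ≤ SA2 := by
    have h2 : (c * ((Fintype.card G : ℝ) ^ m * 2 ^ m)) ^ 2 ≤ SA ^ 2 :=
      pow_le_pow_left₀ (by positivity) hcK 2
    nlinarith [hK, hcs2, h2]
  -- aggregate the pointwise bound M1
  have hM1sum : ∑ ω : (Fin m → G) × (Fin m → Bool),
        (2^m/4 * ((m:ℝ)^2 * (Fintype.card G : ℝ) * (CSTmain.Af k m ω.1 ω.2)^2
          - (m:ℝ) * (Fintype.card G : ℝ)))
      ≤ ∑ ω : (Fin m → G) × (Fin m → Bool),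
          ∑ p : Fin m → Bool, ⨆ Z : G → Bool, CSTmain.U k m p ω.1 ω.2 Z :=
    Finset.sum_le_sum fun ω _ => CSTmain.M1 k m hk1 hm0 ω.1 ω.2
  have hPsum : ∑ p : Fin m → Bool, CSTmain.P (G := G) k m p
      = (1/((Fintype.card G : ℝ) ^ m * 2 ^ m)) * ∑ ω : (Fin m → G) × (Fin m → Bool),
          ∑ p : Fin m → Bool, ⨆ Z : G → Bool, CSTmain.U k m p ω.1 ω.2 Z := by
    have hperp : ∀ p : Fin m → Bool, CSTmain.P (G := G) k m p
        = (1/((Fintype.card G : ℝ) ^ m * 2 ^ m)) * ∑ ω : (Fin m → G) × (Fin m → Bool),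
            ⨆ Z : G → Bool, CSTmain.U k m p ω.1 ω.2 Z := by
      intro p
      rw [CSTmain.P, CSTmain.NORM]
    simp only [hperp]
    rw [← Finset.mul_sum, Finset.sum_comm]
  have hsum1 : ∑ ω : (Fin m → G) × (Fin m → Bool),
        (2^m/4 * ((m:ℝ)^2 * (Fintype.card G : ℝ) * (CSTmain.Af k m ω.1 ω.2)^2
          - (m:ℝ) * (Fintype.card G : ℝ)))
      = (2^m/4 * (m:ℝ)^2 * (Fintype.card G : ℝ)) * SA2
        - ((Fintype.card G : ℝ) ^ m * 2 ^ m) * (2^m/4 * ((m:ℝ) * (Fintype.card G : ℝ))) := by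
    have hptw : ∀ ω : (Fin m → G) × (Fin m → Bool),
        2^m/4 * ((m:ℝ)^2 * (Fintype.card G : ℝ) * (CSTmain.Af k m ω.1 ω.2)^2
          - (m:ℝ) * (Fintype.card G : ℝ))
        = (2^m/4 * (m:ℝ)^2 * (Fintype.card G : ℝ)) * (CSTmain.Af k m ω.1 ω.2)^2
          - 2^m/4 * ((m:ℝ) * (Fintype.card G : ℝ)) := by
      intro ω; ring
    simp only [hptw]
    rw [Finset.sum_sub_distrib, ← Finset.mul_sum, Finset.sum_const, Finset.card_univ,
      nsmul_eq_mul, ← hSA2def, CSTmain.cardOmega]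
  have main : 2^m * (c ^ 2 * (m:ℝ)^2 * (Fintype.card G : ℝ) / 8)
      ≤ ∑ p : Fin m → Bool, CSTmain.P (G := G) k m p := by
    rw [hPsum]
    have h2m : (0:ℝ) < 2^m := by positivity
    have final : 2^m * (c ^ 2 * (m:ℝ)^2 * (Fintype.card G : ℝ) / 8)
        ≤ (1/((Fintype.card G : ℝ) ^ m * 2 ^ m)) *
            ((2^m/4 * (m:ℝ)^2 * (Fintype.card G : ℝ)) * SA2
              - ((Fintype.card G : ℝ) ^ m * 2 ^ m) * (2^m/4 * ((m:ℝ) * (Fintype.card G : ℝ)))) := by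
      rw [one_div, inv_mul_eq_div, le_div_iff₀ hK]
      have hA2 : (2^m/4 * (m:ℝ)^2 * (Fintype.card G : ℝ)) * (c^2 * ((Fintype.card G : ℝ) ^ m * 2 ^ m))
          ≤ (2^m/4 * (m:ℝ)^2 * (Fintype.card G : ℝ)) * SA2 :=
        mul_le_mul_of_nonneg_left hSA2 (by positivity)
      nlinarith [hA2, mul_pos h2m hK, mul_pos hm0 hNpos, hK,
        mul_nonneg (mul_nonneg (mul_nonneg h2m.le hK.le) (mul_pos hm0 hNpos).le)
          (sub_nonneg.2 hmc)]
    calc 2^m * (c ^ 2 * (m:ℝ)^2 * (Fintype.card G : ℝ) / 8)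
        ≤ (1/((Fintype.card G : ℝ) ^ m * 2 ^ m)) *
            ((2^m/4 * (m:ℝ)^2 * (Fintype.card G : ℝ)) * SA2
              - ((Fintype.card G : ℝ) ^ m * 2 ^ m) * (2^m/4 * ((m:ℝ) * (Fintype.card G : ℝ)))) := final
      _ ≤ (1/((Fintype.card G : ℝ) ^ m * 2 ^ m)) * ∑ ω : (Fin m → G) × (Fin m → Bool),
            ∑ p : Fin m → Bool, ⨆ Z : G → Bool, CSTmain.U k m p ω.1 ω.2 Z := by
          apply mul_le_mul_of_nonneg_left _ (by positivity)
          rw [← hsum1]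
          exact hM1sum
  obtain ⟨p, _, hp⟩ := Finset.exists_le_of_sum_le
    (Finset.univ_nonempty (α := Fin m → Bool))
    (f := fun _ : Fin m → Bool => c ^ 2 * (m:ℝ)^2 * (Fintype.card G : ℝ) / 8)
    (g := fun p => CSTmain.P (G := G) k m p)
    (by
      rw [Finset.sum_const, Finset.card_univ, nsmul_eq_mul]
      have hcard2 : (Fintype.card (Fin m → Bool) : ℝ) = 2 ^ m := by
        simp [Fintype.card_fun]
      rw [hcard2]
      exact main)
  refine ⟨Finset.univ.filter (fun i => p i = true),
          Finset.univ.filter (fun i => p i = false), ?_, ?_, ?_⟩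
  · rw [Finset.disjoint_left]
    intro a ha hb
    simp only [Finset.mem_filter] at ha hb
    rw [ha.2] at hb
    exact absurd hb.2 (by simp)
  · ext i
    simp only [Finset.mem_union, Finset.mem_filter, Finset.mem_univ, true_and, iff_true]
    cases hpi : p i <;> simp
  · rw [CSTmain.M2 k m p _ _ rfl rfl]
    exact hp


/-- Cauchy–Schwarz trick (Lemma 8): from a lower bound on the symmetrized count with signs
over `{−1,1}^m`, one obtains a partition `[m] = L ⊎ R` and a lower bound for the associated
bilinear expression. -/
theorem cauchy_schwarz_trick
    {G : Type*} [AddCommGroup G] [Fintype G] [DecidableEq G]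
    (k m : ℕ) (hk : 2 ≤ k) (c : ℝ) (hc : 0 < c) (hm : 2 / c ^ 2 ≤ (m : ℝ))
    (h : c ≤ (1 / (Fintype.card G : ℝ) ^ m) *
        ∑ D : Fin m → G, (1 / 2 ^ m : ℝ) *
          ∑ σ : Fin m → Bool, ⨆ Z : G → Bool,
            |(1 / ((m : ℝ) * (Fintype.card G : ℝ))) *
              ∑ i, ∑ x : G, sg (σ i) *
                ∏ ℓ ∈ Finset.range k, sg (Z (x + ℓ • D i))|) :
    ∃ L R : Finset (Fin m), Disjoint L R ∧ L ∪ R = Finset.univ ∧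
      c ^ 2 * (m : ℝ) ^ 2 * (Fintype.card G : ℝ) / 8 ≤
        (1 / (Fintype.card G : ℝ) ^ m) *
          ∑ D : Fin m → G, (1 / 2 ^ L.card : ℝ) *
            ∑ σ : ↥L → Bool, (1 / 2 ^ R.card : ℝ) *
              ∑ τ : ↥R → Bool, ⨆ Z : G → Bool,
                ∑ i : ↥L, ∑ j : ↥R, ∑ x : G, sg (σ i) * sg (τ j) *
                  ∏ ℓ ∈ Finset.Icc 1 (k - 1),
                    (sg (Z (x + ℓ • D i.1)) * sg (Z (x + ℓ • D j.1))) :=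
  cauchy_schwarz_trick' k m hk c hc hm h
end

section
/- Let r ≥ 1 and m ≥ 1 be integers, let G be a finite abelian group of order N with gcd(N, (2r)!) = 1, and let L and R be disjoint subsets of [m]. If D = (d₁,…,d_m) is uniformly distributed on G^m, then E_D [ #{ (i,j) ∈ L×R : |P_{ij}(0)| ≠ 4r } ] ≤ 6·r²·m²/N, where P_{ij}(0) = {ℓ·dᵢ : 1 ≤ ℓ ≤ 2r} ∪ {ℓ·dⱼ : 1 ≤ ℓ ≤ 2r}. -/
/-! For `i ≠ j` the pair `(D i, D j)` is uniformly distributed on `G × G`, since it is the image of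
`D` under a surjective homomorphism. So it suffices to count the degenerate pairs `(a, b) ∈ G × G`.
As `N` is coprime to `(2r)!`, every nonzero element of `G` has order `> 2r` and `ℓ • ·` is injective
on `G` for `1 ≤ ℓ ≤ 2r`. Hence `(a, b)` is degenerate only if `a = 0`, `b = 0` or `ℓ • a = ℓ' • b`
for some `ℓ, ℓ' ∈ [1, 2r]`, and each of these `2 + 4r²` conditions holds for at most `N` pairs. -/

open Finset

theorem card_filter_comp_mul_card_of_surjective {A B : Type*} [AddGroup A] [AddGroup B]
    [Fintype A] [Fintype B] [DecidableEq B] {φ : A →+ B} (hφ : Function.Surjective φ)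
    (p : B → Prop) [DecidablePred p] :
    #{a | p (φ a)} * Fintype.card B = #{b | p b} * Fintype.card A := by
  set c := #{a | φ a = 0}
  have hfiber (b : B) : #{a | φ a = b} = c :=
    AddMonoidHom.card_fiber_eq_of_mem_range φ (hφ b) (hφ 0)
  have hp : #{a | p (φ a)} = #{b | p b} * c := by
    rw [card_eq_sum_card_fiberwise (f := φ) (t := {b | p b}) (fun a ha => by simpa using ha),
      sum_congr rfl fun b hb => ?_, sum_const, smul_eq_mul]
    rw [filter_filter,
      filter_congr fun a _ => and_iff_right_of_imp fun h => h ▸ (mem_filter.mp hb).2, hfiber]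
  have hA : Fintype.card A = Fintype.card B * c := by
    rw [← card_univ, card_eq_sum_card_fiberwise (f := φ) (t := univ) (fun _ _ => mem_univ _)]
    simp only [hfiber, sum_const, card_univ, smul_eq_mul]
  rw [hp, hA]
  ring

theorem card_filter_apply_pair_mul_card_sq {ι G : Type*} [DecidableEq ι] [Fintype ι]
    [AddGroup G] [Fintype G] [DecidableEq G] {i j : ι} (hij : i ≠ j)
    (p : G × G → Prop) [DecidablePred p] :
    #{D : ι → G | p (D i, D j)} * Fintype.card G ^ 2 =
      #{q | p q} * Fintype.card G ^ Fintype.card ι := by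
  have hsurj : Function.Surjective
      ((Pi.evalAddMonoidHom (fun _ => G) i).prod (Pi.evalAddMonoidHom (fun _ => G) j)) := by
    rintro ⟨x, y⟩
    refine ⟨fun k => if k = i then x else y, ?_⟩
    simp [hij.symm]
  have := card_filter_comp_mul_card_of_surjective hsurj p
  rwa [Fintype.card_prod, Fintype.card_fun, ← sq] at this

section Multiples

variable {G : Type*} [AddGroup G] [Fintype G] {k : ℕ}

theorem lt_addOrderOf_of_coprime_factorial (hcop : (Fintype.card G).Coprime k.factorial)
    {c : G} (hc : c ≠ 0) : k < addOrderOf c := by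
  by_contra! hle
  have hdvd : addOrderOf c ∣ k.factorial := Nat.dvd_factorial (addOrderOf_pos c) hle
  exact hc <| AddMonoid.addOrderOf_eq_one_iff.mp <|
    Nat.eq_one_of_dvd_coprimes hcop addOrderOf_dvd_card hdvd

theorem nsmul_injective_of_coprime_factorial (hcop : (Fintype.card G).Coprime k.factorial)
    {n : ℕ} (hn₀ : 1 ≤ n) (hn : n ≤ k) : Function.Injective fun a : G => n • a :=
  (nsmulCoprime (n := n) (G := G) <| by
    rw [Nat.card_eq_fintype_card]
    exact hcop.coprime_dvd_right (Nat.dvd_factorial hn₀ hn)).injective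

variable [DecidableEq G]

def multiplesUpTo (k : ℕ) (a : G) : Finset G := (Icc 1 k).image fun ℓ => ℓ • a

theorem card_multiplesUpTo (hcop : (Fintype.card G).Coprime k.factorial) {a : G} (ha : a ≠ 0) :
    #(multiplesUpTo k a) = k := by
  rw [multiplesUpTo, card_image_of_injOn, Nat.card_Icc, Nat.add_sub_cancel]
  refine nsmul_injOn_Iio_addOrderOf.mono fun ℓ hℓ => ?_
  have := lt_addOrderOf_of_coprime_factorial hcop ha
  simp only [coe_Icc, Set.mem_Icc, Set.mem_Iio] at hℓ ⊢
  omega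

theorem eq_zero_or_eq_zero_or_nsmul_eq_nsmul (hcop : (Fintype.card G).Coprime k.factorial)
    {a b : G} (h : #(multiplesUpTo k a ∪ multiplesUpTo k b) ≠ 2 * k) :
    a = 0 ∨ b = 0 ∨ ∃ ℓ ∈ Icc 1 k, ∃ ℓ' ∈ Icc 1 k, ℓ • a = ℓ' • b := by
  by_contra! hnd
  obtain ⟨ha, hb, hne⟩ := hnd
  have hdisj : Disjoint (multiplesUpTo k a) (multiplesUpTo k b) := by
    simp only [multiplesUpTo, disjoint_left, mem_image, not_exists, not_and]
    rintro _ ⟨ℓ, hℓ, rfl⟩ ℓ' hℓ' h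
    exact hne ℓ hℓ ℓ' hℓ' h.symm
  rw [card_union_of_disjoint hdisj, card_multiplesUpTo hcop ha, card_multiplesUpTo hcop hb] at h
  omega

theorem card_degenerate_le (hcop : (Fintype.card G).Coprime k.factorial) :
    #{q : G × G | #(multiplesUpTo k q.1 ∪ multiplesUpTo k q.2) ≠ 2 * k} ≤
      (2 + k ^ 2) * Fintype.card G := by
  set N := Fintype.card G
  have hsub : ({q : G × G | #(multiplesUpTo k q.1 ∪ multiplesUpTo k q.2) ≠ 2 * k} : Finset _) ⊆
      ({0} ×ˢ univ ∪ univ ×ˢ {0}) ∪ (Icc 1 k ×ˢ Icc 1 k).biUnion fun ℓ =>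
        ({q : G × G | ℓ.1 • q.1 = ℓ.2 • q.2} : Finset _) := by
    rintro ⟨x, y⟩ hq
    rw [mem_filter] at hq
    rcases eq_zero_or_eq_zero_or_nsmul_eq_nsmul hcop hq.2 with rfl | rfl | ⟨ℓ, hℓ, ℓ', hℓ', h⟩
    · simp
    · simp
    · exact mem_union_right _ (mem_biUnion.mpr ⟨(ℓ, ℓ'), mem_product.mpr ⟨hℓ, hℓ'⟩, by simpa⟩)
  have hline (ℓ : ℕ × ℕ) (hℓ : ℓ ∈ Icc 1 k ×ˢ Icc 1 k) :
      #({q : G × G | ℓ.1 • q.1 = ℓ.2 • q.2} : Finset _) ≤ N := by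
    simp only [mem_product, mem_Icc] at hℓ
    refine (card_le_card_of_injOn Prod.snd (fun _ _ => mem_coe.mpr (mem_univ _)) ?_).trans_eq
      card_univ
    rintro ⟨x, y⟩ hq ⟨x', y'⟩ hq' (rfl : y = y')
    simp only [coe_filter, Set.mem_ofPred_eq, mem_univ, true_and] at hq hq'
    exact Prod.ext (nsmul_injective_of_coprime_factorial hcop hℓ.1.1 hℓ.1.2 (hq.trans hq'.symm)) rfl
  calc _ ≤ #({0} ×ˢ univ ∪ univ ×ˢ {0} : Finset (G × G)) +
        #((Icc 1 k ×ˢ Icc 1 k).biUnion fun ℓ => ({q : G × G | ℓ.1 • q.1 = ℓ.2 • q.2} : Finset _)) :=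
        (card_le_card hsub).trans (card_union_le _ _)
    _ ≤ (N + N) + ∑ _ℓ ∈ Icc 1 k ×ˢ Icc 1 k, N := by
        gcongr
        · exact (card_union_le _ _).trans (by simp [N])
        · exact card_biUnion_le.trans (sum_le_sum hline)
    _ = (2 + k ^ 2) * N := by
        rw [sum_const, card_product, Nat.card_Icc, Nat.add_sub_cancel, smul_eq_mul]
        ring

theorem sum_card_degenerate_mul_card_le {ι : Type*} [Fintype ι] [DecidableEq ι]
    (hcop : (Fintype.card G).Coprime k.factorial) {L R : Finset ι} (hLR : Disjoint L R) :
    (∑ D : ι → G, #{ij ∈ L ×ˢ R | #(multiplesUpTo k (D ij.1) ∪ multiplesUpTo k (D ij.2)) ≠ 2 * k})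
        * Fintype.card G ≤ #L * #R * (2 + k ^ 2) * Fintype.card G ^ Fintype.card ι := by
  set N := Fintype.card G
  have hpair (ij : ι × ι) (hij : ij ∈ L ×ˢ R) :
      #{D : ι → G | #(multiplesUpTo k (D ij.1) ∪ multiplesUpTo k (D ij.2)) ≠ 2 * k} * N ≤
        (2 + k ^ 2) * N ^ Fintype.card ι := by
    rw [mem_product] at hij
    have hne : ij.1 ≠ ij.2 := fun h => disjoint_left.mp hLR hij.1 (h ▸ hij.2)
    have hunif := card_filter_apply_pair_mul_card_sq hne
      fun q : G × G => #(multiplesUpTo k q.1 ∪ multiplesUpTo k q.2) ≠ 2 * k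
    refine Nat.le_of_mul_le_mul_right (c := N) ?_ Fintype.card_pos
    rw [mul_assoc, ← sq, hunif, mul_right_comm]
    exact Nat.mul_le_mul_right _ (card_degenerate_le hcop)
  calc _ = ∑ ij ∈ L ×ˢ R,
        #{D : ι → G | #(multiplesUpTo k (D ij.1) ∪ multiplesUpTo k (D ij.2)) ≠ 2 * k} * N := by
        simp only [card_filter, sum_mul]
        rw [sum_comm]
    _ ≤ ∑ _ij ∈ L ×ˢ R, (2 + k ^ 2) * N ^ Fintype.card ι := sum_le_sum hpair
    _ = _ := by rw [sum_const, card_product, smul_eq_mul]; ring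

end Multiples

theorem expected_degenerate_pairs_general
    (r m : ℕ) (hr : 1 ≤ r)
    (G : Type) [AddCommGroup G] [Fintype G] [DecidableEq G]
    (hcop : Nat.Coprime (Fintype.card G) (Nat.factorial (2 * r)))
    (L R : Finset (Fin m)) (hLR : Disjoint L R) :
    (1 / (Fintype.card G : ℝ) ^ m) *
        ∑ D : Fin m → G,
          ((((L ×ˢ R).filter fun ij =>
              (((Finset.Icc 1 (2 * r)).image fun ℓ => ℓ • D ij.1) ∪
                ((Finset.Icc 1 (2 * r)).image fun ℓ => ℓ • D ij.2)).card ≠ 4 * r).card : ℝ)) ≤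
      6 * (r : ℝ) ^ 2 * (m : ℝ) ^ 2 / (Fintype.card G : ℝ) := by
  have hN : (0 : ℝ) < Fintype.card G := by exact_mod_cast Fintype.card_pos
  have hcount := sum_card_degenerate_mul_card_le hcop hLR
  rw [Fintype.card_fin, show 2 * (2 * r) = 4 * r by ring] at hcount
  have hL : (#L : ℝ) ≤ m := by exact_mod_cast card_le_univ L |>.trans_eq (Fintype.card_fin m)
  have hR : (#R : ℝ) ≤ m := by exact_mod_cast card_le_univ R |>.trans_eq (Fintype.card_fin m)
  have hr' : (1 : ℝ) ≤ r := by exact_mod_cast hr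
  rw [le_div_iff₀ hN, one_div, inv_mul_eq_div, div_mul_eq_mul_div, div_le_iff₀ (by positivity)]
  have hconst : (#L * #R * (2 + (2 * r) ^ 2) : ℝ) ≤ 6 * r ^ 2 * m ^ 2 := by
    calc _ ≤ (m * m * (6 * r ^ 2) : ℝ) := by gcongr; nlinarith
      _ = _ := by ring
  calc _ ≤ (#L * #R * (2 + (2 * r) ^ 2) * Fintype.card G ^ m : ℝ) := by exact_mod_cast hcount
    _ ≤ _ := by gcongr

/-- Expected number of pairs `(i,j) ∈ L × R` for which the `4r` elements
`ℓ·d_i, ℓ·d_j (1 ≤ ℓ ≤ 2r)` are not pairwise distinct is at most `6 r² m² / N`. -/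
theorem expected_degenerate_pairs
    (r m : ℕ) (hr : 1 ≤ r) (hm : 1 ≤ m)
    (G : Type) [AddCommGroup G] [Fintype G] [DecidableEq G]
    (hcop : Nat.Coprime (Fintype.card G) (Nat.factorial (2 * r)))
    (L R : Finset (Fin m)) (hLR : Disjoint L R) :
    (1 / (Fintype.card G : ℝ) ^ m) *
        ∑ D : Fin m → G,
          ((((L ×ˢ R).filter fun ij =>
              (((Finset.Icc 1 (2 * r)).image fun ℓ => ℓ • D ij.1) ∪
                ((Finset.Icc 1 (2 * r)).image fun ℓ => ℓ • D ij.2)).card ≠ 4 * r).card : ℝ)) ≤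
      6 * (r : ℝ) ^ 2 * (m : ℝ) ^ 2 / (Fintype.card G : ℝ) :=
  expected_degenerate_pairs_general r m hr G hcop L R hLR
end

section
/- For every integer r ≥ 1 there exists N₀ such that the following holds for every integer N ≥ N₀ with gcd(N, (2r)!) = 1, every abelian group G of order N, and every integer m with 1 ≤ m ≤ N: if D = (d₁,…,d_m) is uniformly distributed on G^m, then Pr[ ∃ x ∈ G∖{0} : Σ_{i=1}^m Σ_{ℓ=−2r}^{2r} 1{ℓ·dᵢ = x} > 4·log N ] ≤ 1/N³. -/
/-!
For `x ≠ 0`, only coordinates in `P_x = {d | ∃ ℓ ∈ [-2r, 2r], ℓ • d = x}` count towards the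
multiplicity of `x`, each at most `a = 4r + 1` times. As `N` is coprime to `(2r)!`, every nonzero
`ℓ` in that range acts injectively on `G`, so `|P_x| ≤ a`. A multiplicity above `4 log N` thus puts
`k = ⌈4 log N / a⌉` coordinates into `P_x`, which has probability at most
`C(m, k) (a / N)^k ≤ a^k / k!`. Since `N^4 ≤ e^{ak}` and `k! ≥ (k / e)^k`, this is at most `N^{-4}`
once `k ≥ a e^{a+1}`, and a union bound over `x` gives `N^{-3}`.
-/

open Finset Real
open scoped Nat

section ZSMulPreimage

variable {G : Type*} [AddCommGroup G]

theorem zsmul_injective_of_coprime [Finite G] {ℓ : ℤ} (h : (Nat.card G).Coprime ℓ.natAbs) :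
    Function.Injective (fun g : G => ℓ • g) := by
  intro a b hab
  have hsub : ℓ • (a - b) = 0 := by rw [zsmul_sub]; exact sub_eq_zero.2 hab
  have hord : addOrderOf (a - b) = 1 := Nat.eq_one_of_dvd_coprimes h (addOrderOf_dvd_natCard _)
    (Int.natCast_dvd.1 (addOrderOf_dvd_iff_zsmul_eq_zero.2 hsub))
  exact sub_eq_zero.1 (AddMonoid.addOrderOf_eq_one_iff.1 hord)

theorem Nat.Coprime.coprime_natAbs_of_mem_Icc {N n : ℕ} (hN : N.Coprime n !) {ℓ : ℤ}
    (hℓ : ℓ ∈ Icc (-(n : ℤ)) n) (hℓ0 : ℓ ≠ 0) : N.Coprime ℓ.natAbs :=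
  hN.coprime_dvd_right <| Nat.dvd_factorial (Int.natAbs_pos.2 hℓ0) (by rw [mem_Icc] at hℓ; omega)

variable [Fintype G] [DecidableEq G]

def zsmulPreimage (L : Finset ℤ) (x : G) : Finset G :=
  L.biUnion fun ℓ => {d | ℓ • d = x}

theorem mem_zsmulPreimage {L : Finset ℤ} {x d : G} :
    d ∈ zsmulPreimage L x ↔ ∃ ℓ ∈ L, ℓ • d = x := by
  simp [zsmulPreimage]

theorem card_zsmulPreimage_le {L : Finset ℤ} {x : G} (hx : x ≠ 0)
    (hL : ∀ ℓ ∈ L, ℓ ≠ 0 → Function.Injective (fun g : G => ℓ • g)) :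
    #(zsmulPreimage L x) ≤ #L := by
  calc #(zsmulPreimage L x) ≤ #L * 1 :=
        card_biUnion_le_card_mul _ _ _ fun ℓ hℓ => card_le_one.2 fun a ha b hb => by
          simp only [mem_filter, mem_univ, true_and] at ha hb
          obtain rfl | hℓ0 := eq_or_ne ℓ 0
          · exact absurd (ha.symm.trans (zero_smul ℤ a)) hx
          · exact hL ℓ hℓ hℓ0 (ha.trans hb.symm)
    _ = #L := mul_one _

theorem sum_sum_ite_zsmul_eq_le {ι : Type*} [Fintype ι] (L : Finset ℤ) (x : G) (D : ι → G) :
    ∑ i, ∑ ℓ ∈ L, (if ℓ • D i = x then (1 : ℝ) else 0) ≤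
      #L * #{i | D i ∈ zsmulPreimage L x} := by
  have hcoord (d : G) :
      ∑ ℓ ∈ L, (if ℓ • d = x then (1 : ℝ) else 0) ≤
        if d ∈ zsmulPreimage L x then (#L : ℝ) else 0 := by
    rw [sum_boole]
    split_ifs with hd
    · exact_mod_cast card_filter_le _ _
    · rw [filter_eq_empty_iff.2 fun ℓ hℓ h => hd (mem_zsmulPreimage.2 ⟨ℓ, hℓ, h⟩), card_empty,
        Nat.cast_zero]
  calc _ ≤ ∑ i, (if D i ∈ zsmulPreimage L x then (#L : ℝ) else 0) :=
        sum_le_sum fun i _ => hcoord (D i)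
    _ = _ := by rw [sum_ite, sum_const, sum_const_zero, add_zero, nsmul_eq_mul, mul_comm]

end ZSMulPreimage

section ManyCoordinates

variable {ι α : Type*} [Fintype ι] [DecidableEq ι] [Fintype α]

theorem card_piFinset_ite_mem (s : Finset ι) (A : Finset α) :
    #(Fintype.piFinset fun i => if i ∈ s then A else univ) =
      #A ^ #s * Fintype.card α ^ (Fintype.card ι - #s) := by
  rw [Fintype.card_piFinset, prod_apply_ite, prod_const, prod_const, card_univ,
    filter_not, filter_mem_eq_of_subset (subset_univ s), card_univ_sdiff]

theorem card_filter_many_apply_mem_le [DecidableEq α] (A : Finset α) (k : ℕ) :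
    #{D : ι → α | k ≤ #{i | D i ∈ A}} ≤
      (Fintype.card ι).choose k * (#A ^ k * Fintype.card α ^ (Fintype.card ι - k)) := by
  have hcover : ({D : ι → α | k ≤ #{i | D i ∈ A}} : Finset (ι → α)) ⊆
      (powersetCard k univ).biUnion fun s =>
        Fintype.piFinset fun i => if i ∈ s then A else univ := by
    intro D hD
    obtain ⟨s, hs, rfl⟩ := exists_subset_card_eq (mem_filter.1 hD).2
    refine mem_biUnion.2 ⟨s, mem_powersetCard.2 ⟨subset_univ s, rfl⟩,
      Fintype.mem_piFinset.2 fun i => ?_⟩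
    split_ifs with hi
    · exact (mem_filter.1 (hs hi)).2
    · exact mem_univ _
  calc _ ≤ _ := card_le_card hcover
    _ ≤ #(powersetCard k (univ : Finset ι)) * _ :=
        card_biUnion_le_card_mul _ _ _ fun s hs => by
          rw [card_piFinset_ite_mem, (mem_powersetCard.1 hs).2]
    _ = _ := by rw [card_powersetCard, card_univ]

end ManyCoordinates

theorem Nat.choose_mul_pow_sub_le_pow_div_factorial {m N : ℕ} (k : ℕ) (hmN : m ≤ N) :
    (m.choose k : ℝ) * N ^ (m - k) ≤ N ^ m / k ! := by
  rcases le_or_gt k m with hkm | hkm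
  · calc (m.choose k : ℝ) * N ^ (m - k) ≤ N ^ k / k ! * N ^ (m - k) := by
          gcongr
          exact (Nat.choose_le_pow_div k m).trans (by gcongr)
      _ = N ^ m / k ! := by rw [div_mul_eq_mul_div, ← pow_add, Nat.add_sub_cancel' hkm]
  · rw [Nat.choose_eq_zero_of_lt hkm, Nat.cast_zero, zero_mul]
    positivity

theorem pow_le_factorial_of_mul_exp_one_le {b : ℝ} (hb : 0 ≤ b) {k : ℕ} (hk : b * exp 1 ≤ k) :
    b ^ k ≤ k ! := by
  have hkk : (k : ℝ) ^ k ≤ exp k * k ! :=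
    (div_le_iff₀ (by positivity)).1 (pow_div_factorial_le_exp _ k.cast_nonneg k)
  refine le_of_mul_le_mul_right ?_ (exp_pos k)
  calc b ^ k * exp k = (b * exp 1) ^ k := by rw [mul_pow, ← exp_nat_mul, mul_one]
    _ ≤ (k : ℝ) ^ k := by gcongr
    _ ≤ exp k * k ! := hkk
    _ = k ! * exp k := mul_comm _ _

theorem pow_four_mul_pow_ceil_le_factorial {a N : ℝ} (ha : 0 < a)
    (hN : exp (a ^ 2 * exp (a + 1) / 4) ≤ N) :
    N ^ 4 * a ^ ⌈4 * log N / a⌉₊ ≤ ⌈4 * log N / a⌉₊ ! := by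
  set k := ⌈4 * log N / a⌉₊
  have hN0 : 0 < N := (exp_pos _).trans_le hN
  have hlog : 4 * log N ≤ a * k := (div_le_iff₀' ha).1 (Nat.le_ceil _)
  have hk : a * exp (a + 1) ≤ k := by
    refine le_trans ?_ (Nat.le_ceil _)
    rw [le_div_iff₀ ha]
    linarith [(le_log_iff_exp_le hN0).2 hN]
  have hN4 : N ^ 4 ≤ exp a ^ k := by
    rw [← exp_log hN0, ← exp_nat_mul, ← exp_nat_mul]
    exact exp_le_exp.2 (by push_cast; linarith)
  calc N ^ 4 * a ^ k ≤ exp a ^ k * a ^ k := by gcongr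
    _ = (a * exp a) ^ k := by rw [mul_pow, mul_comm]
    _ ≤ k ! := pow_le_factorial_of_mul_exp_one_le (by positivity) (by rwa [mul_assoc, ← exp_add])

theorem card_filter_exists_many_mem_zsmulPreimage_le {G ι : Type*} [AddCommGroup G] [Fintype G]
    [DecidableEq G] [Fintype ι] [DecidableEq ι] {L : Finset ℤ}
    (hL : ∀ ℓ ∈ L, ℓ ≠ 0 → Function.Injective (fun g : G => ℓ • g)) (k : ℕ)
    (hιG : Fintype.card ι ≤ Fintype.card G) :
    (#{D : ι → G | ∃ x ≠ 0, k ≤ #{i | D i ∈ zsmulPreimage L x}} : ℝ) ≤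
      Fintype.card G * (Fintype.card G ^ Fintype.card ι * #L ^ k / k !) := by
  set N := Fintype.card G
  set m := Fintype.card ι
  have hcover : ({D : ι → G | ∃ x ≠ 0, k ≤ #{i | D i ∈ zsmulPreimage L x}} : Finset (ι → G)) ⊆
      (univ.erase 0).biUnion fun x => {D | k ≤ #{i | D i ∈ zsmulPreimage L x}} := by
    intro D hD
    obtain ⟨x, hx, hD⟩ := (mem_filter.1 hD).2
    exact mem_biUnion.2 ⟨x, mem_erase.2 ⟨hx, mem_univ x⟩, mem_filter.2 ⟨mem_univ D, hD⟩⟩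
  have hcard : #{D : ι → G | ∃ x ≠ 0, k ≤ #{i | D i ∈ zsmulPreimage L x}} ≤
      N * (m.choose k * (#L ^ k * N ^ (m - k))) :=
    calc _ ≤ _ := card_le_card hcover
      _ ≤ #(univ.erase (0 : G)) * (m.choose k * (#L ^ k * N ^ (m - k))) :=
          card_biUnion_le_card_mul _ _ _ fun x hx =>
            (card_filter_many_apply_mem_le _ k).trans <| by
              gcongr
              exact card_zsmulPreimage_le (mem_erase.1 hx).1 hL
      _ ≤ _ := by gcongr; exact card_le_univ _
  calc _ ≤ (N : ℝ) * (m.choose k * N ^ (m - k) * #L ^ k) := by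
        rw [mul_assoc (m.choose k : ℝ), mul_comm ((N : ℝ) ^ _)]
        exact_mod_cast hcard
    _ ≤ N * (N ^ m / k ! * #L ^ k) := by
        gcongr
        exact Nat.choose_mul_pow_sub_le_pow_div_factorial k hιG
    _ = _ := by rw [div_mul_eq_mul_div]

theorem multiplicity_chernoff_general (r : ℕ) :
    ∃ N₀ : ℕ, ∀ N : ℕ, N₀ ≤ N → Nat.Coprime N (Nat.factorial (2 * r)) →
      ∀ (G : Type) [AddCommGroup G] [Fintype G] [DecidableEq G], Fintype.card G = N →
        ∀ m : ℕ, 1 ≤ m → m ≤ N →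
          (Nat.card {D : Fin m → G // ∃ x : G, x ≠ 0 ∧
              4 * Real.log N <
                ∑ i, ∑ ℓ ∈ Finset.Icc (-(2 * r : ℤ)) (2 * r : ℤ),
                  (if ℓ • D i = x then (1 : ℝ) else 0)} : ℝ) /
            (N : ℝ) ^ m ≤ 1 / (N : ℝ) ^ 3 := by
  set L := Icc (-(2 * r : ℤ)) (2 * r : ℤ)
  set a : ℝ := Nat.cast #L
  have ha : 0 < a := Nat.cast_pos.2 (card_pos.2 ⟨0, by simp [L]⟩)
  refine ⟨⌈exp (a ^ 2 * exp (a + 1) / 4)⌉₊, fun N hN₀ hcop G _ _ _ hcard m _ hmN => ?_⟩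
  have hexp : exp (a ^ 2 * exp (a + 1) / 4) ≤ N := Nat.ceil_le.1 hN₀
  have hN : (0 : ℝ) < N := (exp_pos _).trans_le hexp
  set k := ⌈4 * log N / a⌉₊
  have hcardG : Nat.card G = N := Nat.card_eq_fintype_card.trans hcard
  have hL : ∀ ℓ ∈ L, ℓ ≠ 0 → Function.Injective (fun g : G => ℓ • g) := fun ℓ hℓ hℓ0 =>
    zsmul_injective_of_coprime <|
      hcardG ▸ hcop.coprime_natAbs_of_mem_Icc (by exact_mod_cast hℓ) hℓ0
  have hbad : ({D : Fin m → G | ∃ x ≠ 0, 4 * log N <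
      ∑ i, ∑ ℓ ∈ L, (if ℓ • D i = x then (1 : ℝ) else 0)} : Finset (Fin m → G)) ⊆
      ({D : Fin m → G | ∃ x ≠ 0, k ≤ #{i | D i ∈ zsmulPreimage L x}} : Finset (Fin m → G)) :=
    monotone_filter_right _ fun D _ ⟨x, hx, hD⟩ => ⟨x, hx, Nat.ceil_le.2 <|
      (div_le_iff₀' ha).2 (hD.le.trans (sum_sum_ite_zsmul_eq_le L x D))⟩
  have hcount := card_filter_exists_many_mem_zsmulPreimage_le (ι := Fin m) hL k
    (by rwa [Fintype.card_fin, hcard])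
  rw [Fintype.card_fin, hcard] at hcount
  rw [Nat.card_eq_fintype_card, Fintype.card_subtype,
    div_le_div_iff₀ (by positivity) (by positivity)]
  calc _ ≤ (N : ℝ) * (N ^ m * a ^ k / k !) * N ^ 3 := by
        gcongr
        exact (Nat.cast_le.2 (card_le_card hbad)).trans hcount
    _ = N ^ m * (N ^ 4 * a ^ k / k !) := by ring
    _ ≤ N ^ m * 1 := by
        gcongr
        exact div_le_one_of_le₀ (pow_four_mul_pow_ceil_le_factorial ha hexp) (by positivity)
    _ = 1 * N ^ m := by ring

/-- Chernoff-type estimate for the multiplicity condition: for every `r ≥ 1`, for all large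
enough `N` coprime to `(2r)!`, any abelian group `G` of order `N`, and any `1 ≤ m ≤ N`, the
probability (over a uniform `D ∈ G^m`) that some nonzero `x` satisfies
`∑_i ∑_{ℓ=-2r}^{2r} 1{ℓ·d_i = x} > 4 log N` is at most `1/N³`. -/
theorem multiplicity_chernoff (r : ℕ) (hr : 1 ≤ r) :
    ∃ N₀ : ℕ, ∀ N : ℕ, N₀ ≤ N → Nat.Coprime N (Nat.factorial (2 * r)) →
      ∀ (G : Type) [AddCommGroup G] [Fintype G] [DecidableEq G], Fintype.card G = N →
        ∀ m : ℕ, 1 ≤ m → m ≤ N →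
          (Nat.card {D : Fin m → G // ∃ x : G, x ≠ 0 ∧
              4 * Real.log N <
                ∑ i, ∑ ℓ ∈ Finset.Icc (-(2 * r : ℤ)) (2 * r : ℤ),
                  (if ℓ • D i = x then (1 : ℝ) else 0)} : ℝ) /
            (N : ℝ) ^ m ≤ 1 / (N : ℝ) ^ 3 :=
  multiplicity_chernoff_general r
end

section
/- Let G be a finite abelian group of order N, let r ≥ 1 be an integer, and let s be an integer with 2r ≤ s ≤ N − 2r. Let d, d′ ∈ G be such that the 4r elements ℓ·d (1 ≤ ℓ ≤ 2r) and ℓ·d′ (1 ≤ ℓ ≤ 2r) are pairwise distinct. For x ∈ G set P(x) = {x+ℓ·d : 1 ≤ ℓ ≤ 2r}, P′(x) = {x+ℓ·d′ : 1 ≤ ℓ ≤ 2r} and Q(x) = P(x) ∪ P′(x), and define M(S,T) = #{ x ∈ G : |S ∩ P(x)| = r, |S ∩ P′(x)| = r, and S △ T = Q(x) } for s-element subsets S, T of G. Then for every function Z : G → {−1,1}: Σ_{S,T} M(S,T) · Π_{y∈S} Z(y) · Π_{y∈T} Z(y) = C(2r,r)² · C(N−4r, s−2r) · Σ_{x∈G}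 Π_{y∈Q(x)} Z(y), where the outer sum is over all ordered pairs of s-element subsets S, T of G. -/
/-!
Write `Q(x) = P(x) ∪ P'(x)`. Translating the hypothesis on `Q(0)` shows that `P(x)` and `P'(x)` are
disjoint sets of size `2r`. For fixed `x` and `S`, the condition `S △ T = Q(x)` singles out
`T = S △ Q(x)`, and since `Z² = 1` we get `∏_S Z · ∏_T Z = ∏_{S △ T} Z = ∏_{Q(x)} Z`. Hence the left
side is `∑_x ∏_{Q(x)} Z` weighted by the number of `s`-sets meeting `P(x)` and `P'(x)` in exactly
`r` points each, which is `C(2r,r)² C(N-4r, s-2r)`.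
-/

open Finset
open scoped symmDiff

/-- `P(x) = {x + ℓ·d : 1 ≤ ℓ ≤ 2r}`. -/
def prog {G : Type*} [AddCommGroup G] [DecidableEq G] (r : ℕ) (d x : G) : Finset G :=
  (Finset.Icc 1 (2 * r)).image fun ℓ => x + ℓ • d

section FinsetLemmas

variable {α : Type*} [DecidableEq α]

theorem card_eq_and_disjoint_of_card_union_eq {A B : Finset α} {n : ℕ} (hA : #A ≤ n)
    (hB : #B ≤ n) (hAB : #(A ∪ B) = 2 * n) : #A = n ∧ #B = n ∧ Disjoint A B := by
  have h := card_union_add_card_inter A B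
  exact ⟨by omega, by omega, disjoint_iff_inter_eq_empty.2 (card_eq_zero.1 (by omega))⟩

theorem card_symmDiff_add_two_mul_card_inter (S Q : Finset α) :
    #(S ∆ Q) + 2 * #(S ∩ Q) = #S + #Q := by
  have hunion := card_union_add_card_inter S Q
  have hsdiff := card_sdiff_of_subset (inter_subset_union (s := S) (t := Q))
  have hle := card_le_card (inter_subset_union (s := S) (t := Q))
  rw [symmDiff_eq_sup_sdiff_inf]
  change #((S ∪ Q) \ (S ∩ Q)) + _ = _
  omega

theorem card_symmDiff_eq_of_two_mul_card_inter {S Q : Finset α} (h : 2 * #(S ∩ Q) = #Q) :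
    #(S ∆ Q) = #S := by
  have := card_symmDiff_add_two_mul_card_inter S Q
  omega

theorem prod_mul_prod_eq_prod_symmDiff {M : Type*} [CommMonoid M] {f : α → M}
    (hf : ∀ a, f a * f a = 1) (S T : Finset α) :
    (∏ a ∈ S, f a) * ∏ a ∈ T, f a = ∏ a ∈ S ∆ T, f a := by
  have hsplit : S ∪ T = S ∆ T ∪ S ∩ T := (symmDiff_sup_inf S T).symm
  have hdisj : Disjoint (S ∆ T) (S ∩ T) := disjoint_symmDiff_inf S T
  rw [← prod_union_inter, hsplit, prod_union hdisj, mul_assoc, ← prod_mul_distrib]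
  simp [hf]

theorem union_inter_eq_and_union_sdiff_eq {X Y A : Finset α} (hXA : X ⊆ A)
    (hYA : Disjoint Y A) : (X ∪ Y) ∩ A = X ∧ (X ∪ Y) \ A = Y := by
  have hY : ∀ y ∈ Y, y ∉ A := disjoint_left.1 hYA
  constructor <;> ext y <;> have := @hXA y <;> have := hY y <;>
    simp only [mem_inter, mem_union, mem_sdiff] <;> tauto

/-- Choosing `S ⊆ U` amounts to choosing independently its trace on `A` and its part outside. -/
theorem card_filter_powersetCard_inter_sdiff {U A : Finset α} (hAU : A ⊆ U) {a s : ℕ}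
    (has : a ≤ s) (p : Finset α → Prop) [DecidablePred p] :
    #{S ∈ U.powersetCard s | #(S ∩ A) = a ∧ p (S \ A)} =
      (#A).choose a * #{T ∈ (U \ A).powersetCard (s - a) | p T} := by
  rw [← card_powersetCard, ← card_product]
  refine card_nbij' (fun S => (S ∩ A, S \ A)) (fun X => X.1 ∪ X.2) ?_ ?_ ?_ ?_
  · intro S hS
    simp only [mem_coe, mem_filter, mem_product, mem_powersetCard] at hS ⊢
    obtain ⟨⟨hSU, hS⟩, hSA, hp⟩ := hS
    have := card_sdiff_add_card_inter S A
    exact ⟨⟨inter_subset_right, hSA⟩, ⟨sdiff_subset_sdiff hSU Subset.rfl, by omega⟩, hp⟩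
  · rintro ⟨X, Y⟩ hXY
    simp only [mem_coe, mem_filter, mem_product, mem_powersetCard, subset_sdiff] at hXY ⊢
    obtain ⟨⟨hXA, hX⟩, ⟨⟨hYU, hYA⟩, hY⟩, hp⟩ := hXY
    obtain ⟨hinter, hsdiff⟩ := union_inter_eq_and_union_sdiff_eq hXA hYA
    rw [hinter, hsdiff, card_union_of_disjoint (hYA.symm.mono_left hXA), hX, hY]
    exact ⟨⟨union_subset (hXA.trans hAU) hYU, by omega⟩, rfl, hp⟩
  · intro S _
    exact sup_inf_sdiff S A
  · rintro ⟨X, Y⟩ hXY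
    simp only [mem_coe, mem_filter, mem_product, mem_powersetCard, subset_sdiff] at hXY
    obtain ⟨⟨hXA, -⟩, ⟨⟨-, hYA⟩, -⟩, -⟩ := hXY
    obtain ⟨hinter, hsdiff⟩ := union_inter_eq_and_union_sdiff_eq hXA hYA
    exact Prod.ext hinter hsdiff

theorem card_filter_powersetCard_inter_inter [Fintype α] {A B : Finset α} (hAB : Disjoint A B)
    {a b s : ℕ} (hs : a + b ≤ s) :
    #{S ∈ (univ : Finset α).powersetCard s | #(S ∩ A) = a ∧ #(S ∩ B) = b} =
      (#A).choose a * ((#B).choose b * (Fintype.card α - #A - #B).choose (s - a - b)) := by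
  have hBA : ∀ S : Finset α, S ∩ B = (S \ A) ∩ B := fun S => by
    rw [sdiff_inter_right_comm, sdiff_eq_self_of_disjoint (hAB.symm.mono_left inter_subset_right)]
  have hBU : B ⊆ univ \ A := subset_sdiff.2 ⟨subset_univ B, hAB.symm⟩
  rw [filter_congr fun S _ => by rw [hBA S]]
  have hcountB := card_filter_powersetCard_inter_sdiff hBU (a := b) (s := s - a) (by omega)
    fun _ => True
  simp only [and_true, filter_true, card_powersetCard] at hcountB
  rw [card_filter_powersetCard_inter_sdiff (subset_univ A) (by omega) fun T => #(T ∩ B) = b,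
    hcountB, card_sdiff_of_subset hBU, card_sdiff_of_subset (subset_univ A), card_univ,
    Nat.sub_sub s]

/-- For fixed `S`, the constraint `S ∆ T = Q` leaves the single term `T = S ∆ Q`, whose weight is
`∏_Q f` because `f` squares to `1`. -/
theorem sum_powersetCard_sum_ite_symmDiff_eq [Fintype α] {R : Type*} [CommSemiring R]
    {f : α → R} (hf : ∀ a, f a * f a = 1) (p : Finset α → Prop) [DecidablePred p]
    (Q : Finset α) {s : ℕ} (hQ : ∀ S : Finset α, #S = s → p S → #(S ∆ Q) = s) :
    ∑ S ∈ (univ : Finset α).powersetCard s, ∑ T ∈ (univ : Finset α).powersetCard s,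
        (if p S ∧ S ∆ T = Q then (∏ a ∈ S, f a) * ∏ a ∈ T, f a else 0) =
      #{S ∈ (univ : Finset α).powersetCard s | p S} * ∏ a ∈ Q, f a := by
  rw [← nsmul_eq_mul, ← sum_const, sum_filter]
  refine sum_congr rfl fun S hS => ?_
  rw [mem_powersetCard] at hS
  by_cases hpS : p S
  · have hT : ∀ T : Finset α, S ∆ T = Q ↔ S ∆ Q = T := fun T => by
      rw [← symmDiff_right_inj (a := S), symmDiff_symmDiff_cancel_left, eq_comm]
    simp only [hpS, true_and, hT, sum_ite_eq, mem_powersetCard, subset_univ, hQ S hS.2 hpS,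
      and_self, if_true, prod_mul_prod_eq_prod_symmDiff hf, symmDiff_symmDiff_cancel_left]
  · simp [hpS]

end FinsetLemmas

section Progressions

variable {G : Type*} [AddCommGroup G] [DecidableEq G]

theorem card_prog_le (r : ℕ) (d x : G) : #(prog r d x) ≤ 2 * r :=
  card_image_le.trans (by simp)

theorem prog_eq_image_add (r : ℕ) (d x : G) : prog r d x = (prog r d 0).image (x + ·) := by
  simp [prog, image_image, Function.comp_def]

theorem card_prog_union_prog (r : ℕ) (d d' x : G) :
    #(prog r d x ∪ prog r d' x) = #(prog r d 0 ∪ prog r d' 0) := by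
  rw [prog_eq_image_add r d, prog_eq_image_add r d', ← image_union,
    card_image_of_injective _ (add_right_injective x)]

end Progressions

theorem matrix_tensor_identity_general
    (G : Type) [AddCommGroup G] [Fintype G] [DecidableEq G]
    (r s : ℕ) (hs1 : 2 * r ≤ s)
    (d d' : G)
    (hdist : (prog r d 0 ∪ prog r d' 0).card = 4 * r)
    (Z : G → ℝ) (hZ : ∀ x, Z x = 1 ∨ Z x = -1) :
    ∑ S ∈ (Finset.univ : Finset G).powersetCard s,
        ∑ T ∈ (Finset.univ : Finset G).powersetCard s,
          ((Finset.univ.filter fun x : G =>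
              (S ∩ prog r d x).card = r ∧ (S ∩ prog r d' x).card = r ∧
                S ∆ T = prog r d x ∪ prog r d' x).card : ℝ) *
            (∏ y ∈ S, Z y) * ∏ y ∈ T, Z y =
      (Nat.choose (2 * r) r : ℝ) ^ 2 *
          (Nat.choose (Fintype.card G - 4 * r) (s - 2 * r) : ℝ) *
        ∑ x : G, ∏ y ∈ prog r d x ∪ prog r d' x, Z y := by
  have hZ2 : ∀ y, Z y * Z y = 1 := fun y => by rcases hZ y with h | h <;> simp [h]
  have hprog : ∀ x, #(prog r d x) = 2 * r ∧ #(prog r d' x) = 2 * r ∧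
      Disjoint (prog r d x) (prog r d' x) := fun x =>
    card_eq_and_disjoint_of_card_union_eq (card_prog_le r d x) (card_prog_le r d' x)
      (by rw [card_prog_union_prog, hdist]; ring)
  calc _ = ∑ x : G, ∑ S ∈ (univ : Finset G).powersetCard s,
        ∑ T ∈ (univ : Finset G).powersetCard s,
          if (#(S ∩ prog r d x) = r ∧ #(S ∩ prog r d' x) = r) ∧
              S ∆ T = prog r d x ∪ prog r d' x
            then (∏ y ∈ S, Z y) * ∏ y ∈ T, Z y else 0 := by
        simp_rw [natCast_card_filter, sum_mul, ite_mul, one_mul, zero_mul, and_assoc]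
        exact (sum_congr rfl fun S _ => sum_comm).trans sum_comm
    _ = ∑ x : G, (#{S ∈ (univ : Finset G).powersetCard s |
          #(S ∩ prog r d x) = r ∧ #(S ∩ prog r d' x) = r} : ℝ) *
            ∏ y ∈ prog r d x ∪ prog r d' x, Z y := by
        refine sum_congr rfl fun x _ => sum_powersetCard_sum_ite_symmDiff_eq hZ2 _ _ ?_
        rintro S hS ⟨hSA, hSB⟩
        obtain ⟨hA, hB, hAB⟩ := hprog x
        refine hS ▸ card_symmDiff_eq_of_two_mul_card_inter ?_
        rw [inter_union_distrib_left, card_union_of_disjoint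
          (hAB.mono inter_subset_right inter_subset_right), card_union_of_disjoint hAB,
          hSA, hSB, hA, hB]
        ring
    _ = _ := by
        simp_rw [card_filter_powersetCard_inter_inter (hprog _).2.2 (by omega : r + r ≤ s),
          (hprog _).1, (hprog _).2.1]
        rw [mul_sum, show Fintype.card G - 2 * r - 2 * r = Fintype.card G - 4 * r by omega,
          show s - r - r = s - 2 * r by omega]
        exact sum_congr rfl fun x _ => by push_cast; ring

/-- The matrix–tensor identity: for `M(S,T)` counting `x ∈ G` with
`|S ∩ P(x)| = |S ∩ P'(x)| = r` and `S △ T = Q(x)`, and any `Z : G → {−1,1}`,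
`∑_{S,T} M(S,T) ∏_{y∈S} Z(y) ∏_{y∈T} Z(y)
  = C(2r,r)² C(N-4r, s-2r) ∑_x ∏_{y∈Q(x)} Z(y)`. -/
theorem matrix_tensor_identity
    (G : Type) [AddCommGroup G] [Fintype G] [DecidableEq G]
    (r s : ℕ) (hr : 1 ≤ r) (hs1 : 2 * r ≤ s) (hs2 : s ≤ Fintype.card G - 2 * r)
    (d d' : G)
    (hdist : (prog r d 0 ∪ prog r d' 0).card = 4 * r)
    (Z : G → ℝ) (hZ : ∀ x, Z x = 1 ∨ Z x = -1) :
    ∑ S ∈ (Finset.univ : Finset G).powersetCard s,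
        ∑ T ∈ (Finset.univ : Finset G).powersetCard s,
          ((Finset.univ.filter fun x : G =>
              (S ∩ prog r d x).card = r ∧ (S ∩ prog r d' x).card = r ∧
                S ∆ T = prog r d x ∪ prog r d' x).card : ℝ) *
            (∏ y ∈ S, Z y) * ∏ y ∈ T, Z y =
      (Nat.choose (2 * r) r : ℝ) ^ 2 *
          (Nat.choose (Fintype.card G - 4 * r) (s - 2 * r) : ℝ) *
        ∑ x : G, ∏ y ∈ prog r d x ∪ prog r d' x, Z y :=
  matrix_tensor_identity_general G r s hs1 d d' hdist Z hZ
end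

section
/- Let G be a finite abelian group of order N with gcd(N, (2r)!) = 1, r ≥ 1, let s be an integer with 2r ≤ s ≤ N − 2r, let m ≥ 1 and let L, R be disjoint subsets of [m]. Let D = (d₁,…,d_m) ∈ G^m, and for x ∈ G set P_i(x) = {x+ℓ·dᵢ : 1 ≤ ℓ ≤ 2r} and P_{ij}(x) = P_i(x) ∪ P_j(x). For i ∈ L and j ∈ R define the matrix M_{ij}, with rows and columns indexed by the s-element subsets of G, by M_{ij}(S,T) = #{ x ∈ G : |S∩P_i(x)| = |S∩P_j(x)| = r and S△T = P_{ij}(x) } if |P_{ij}(0)| = 4r, and M_{ij} = 0 otherwise. Then for all sign vectors σ ∈ {−1,1}^L, τ ∈ {−1,1}^R and all Z : G → {−1,1}: ‖ Σ_{i∈L, j∈R} σᵢ τⱼ M_{ij} ‖_{∞→1} ≥ C(2r,r)² · C(N−4r, s−2r) · Σ_{i∈L, j∈R : |P_{ij}(0)|=4r} σᵢ τⱼ Σ_{x∈G} Π_{y∈P_{ij}(x)} Z(y). -/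
open Finset
open scoped symmDiff

noncomputable section

/-- `‖M‖_{∞→1} = max { uᵀ M v : ‖u‖_∞ ≤ 1, ‖v‖_∞ ≤ 1 }`. -/
def normInfToOne {ι : Type*} [Fintype ι] (M : Matrix ι ι ℝ) : ℝ :=
  sSup {c : ℝ | ∃ u v : ι → ℝ, (∀ a, |u a| ≤ 1) ∧ (∀ a, |v a| ≤ 1) ∧
    c = ∑ a, ∑ b, u a * M a b * v b}

/-- The matrix `M_{ij}`, indexed by `s`-element subsets of `G`:
`M_{ij}(S,T) = #{x : |S ∩ P_i(x)| = |S ∩ P_j(x)| = r, S △ T = P_{ij}(x)}` if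
`|P_{ij}(0)| = 4r`, and `0` otherwise. -/
def Mmat {G : Type*} [AddCommGroup G] [Fintype G] [DecidableEq G] (r s : ℕ) (di dj : G) :
    Matrix {S : Finset G // S.card = s} {S : Finset G // S.card = s} ℝ :=
  fun S T =>
    if (prog r di 0 ∪ prog r dj 0).card = 4 * r then
      ((Finset.univ.filter fun x : G =>
          (S.1 ∩ prog r di x).card = r ∧ (S.1 ∩ prog r dj x).card = r ∧
            S.1 ∆ T.1 = prog r di x ∪ prog r dj x).card : ℝ)
    else 0

end

/- ### Auxiliary lemmas -/

lemma recover_triple {G : Type} [DecidableEq G] {A B X Y W : Finset G}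
    (hXA : X ⊆ A) (hYB : Y ⊆ B) (hAB : Disjoint A B) (hWAB : Disjoint W (A ∪ B)) :
    (X ∪ Y ∪ W) ∩ A = X ∧ (X ∪ Y ∪ W) ∩ B = Y ∧ (X ∪ Y ∪ W) \ (A ∪ B) = W := by
  refine ⟨?_, ?_, ?_⟩
  · rw [union_inter_distrib_right, union_inter_distrib_right,
      inter_eq_left.2 hXA,
      Finset.disjoint_iff_inter_eq_empty.1 (hAB.symm.mono_left hYB),
      Finset.disjoint_iff_inter_eq_empty.1 (hWAB.mono_right subset_union_left),
      union_empty, union_empty]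
  · rw [union_inter_distrib_right, union_inter_distrib_right,
      inter_eq_left.2 hYB,
      Finset.disjoint_iff_inter_eq_empty.1 (hAB.mono_left hXA),
      Finset.disjoint_iff_inter_eq_empty.1 (hWAB.mono_right subset_union_right),
      empty_union, union_empty]
  · rw [union_sdiff_distrib, union_sdiff_distrib,
      sdiff_eq_empty_iff_subset.2 (hXA.trans subset_union_left),
      sdiff_eq_empty_iff_subset.2 (hYB.trans subset_union_right),
      Finset.sdiff_eq_self_of_disjoint hWAB, empty_union, empty_union]

/-- The number of `s`-subsets meeting a fixed `A` in `a` points and a fixed disjoint `B`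
in `b` points. -/
lemma count_triple {G : Type} [Fintype G] [DecidableEq G] (A B : Finset G) (hAB : Disjoint A B)
    (s a b : ℕ) (hab : a + b ≤ s) :
    (univ.filter fun S : Finset G => S.card = s ∧ (S ∩ A).card = a ∧ (S ∩ B).card = b).card
      = A.card.choose a * (B.card.choose b *
        (Fintype.card G - (A.card + B.card)).choose (s - (a + b))) := by
  have hcompl : (univ \ (A ∪ B)).card = Fintype.card G - (A.card + B.card) := by
    rw [Finset.card_sdiff_of_subset (subset_univ _), Finset.card_union_of_disjoint hAB, Finset.card_univ]
  have key : (univ.filter fun S : Finset G => S.card = s ∧ (S ∩ A).card = a ∧ (S ∩ B).card = b).card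
      = ((A.powersetCard a) ×ˢ ((B.powersetCard b) ×ˢ
          ((univ \ (A ∪ B)).powersetCard (s - (a + b))))).card := by
    apply Finset.card_bij' (fun S _ => (S ∩ A, S ∩ B, S \ (A ∪ B)))
      (fun p _ => p.1 ∪ p.2.1 ∪ p.2.2)
    · rintro S hS
      simp only [mem_filter, mem_univ, true_and] at hS
      obtain ⟨hs, ha, hb⟩ := hS
      have hdisj : Disjoint (S ∩ A) (S ∩ B) := hAB.mono inter_subset_right inter_subset_right
      have hcardiu : (S ∩ (A ∪ B)).card = a + b := by
        rw [inter_union_distrib_left, Finset.card_union_of_disjoint hdisj, ha, hb]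
      have hsd : (S \ (A ∪ B)).card = s - (a + b) := by
        rw [← Finset.sdiff_inter_self_left, Finset.card_sdiff_of_subset inter_subset_left, hs, hcardiu]
      simp only [mem_product, mem_powersetCard]
      exact ⟨⟨inter_subset_right, ha⟩, ⟨inter_subset_right, hb⟩,
        sdiff_subset_sdiff (subset_univ _) le_rfl, hsd⟩
    · rintro ⟨X, Y, W⟩ hp
      simp only [mem_product, mem_powersetCard] at hp
      obtain ⟨⟨hXA, hXa⟩, ⟨hYB, hYb⟩, hWc, hWcard⟩ := hp
      have hXY : Disjoint X Y := hAB.mono hXA hYB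
      have hWAB : Disjoint W (A ∪ B) := by
        rw [Finset.disjoint_left]; intro w hw
        have := hWc hw; rw [mem_sdiff] at this; exact this.2
      have hXYW : Disjoint (X ∪ Y) W := by
        rw [disjoint_union_left]
        exact ⟨(hWAB.mono_right (hXA.trans subset_union_left)).symm,
          (hWAB.mono_right (hYB.trans subset_union_right)).symm⟩
      obtain ⟨h1, h2, h3⟩ := recover_triple hXA hYB hAB hWAB
      have hcard : (X ∪ Y ∪ W).card = s := by
        rw [Finset.card_union_of_disjoint hXYW, Finset.card_union_of_disjoint hXY,
          hXa, hYb, hWcard, Nat.add_sub_cancel' hab]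
      simp only [mem_filter, mem_univ, true_and]
      exact ⟨hcard, by rw [h1, hXa], by rw [h2, hYb]⟩
    · intro S hS
      simp only
      rw [← inter_union_distrib_left]
      ext x; simp only [Finset.mem_union, Finset.mem_inter, Finset.mem_sdiff]; tauto
    · rintro ⟨X, Y, W⟩ hp
      simp only [mem_product, mem_powersetCard] at hp
      obtain ⟨⟨hXA, hXa⟩, ⟨hYB, hYb⟩, hWc, hWcard⟩ := hp
      have hWAB : Disjoint W (A ∪ B) := by
        rw [Finset.disjoint_left]; intro w hw
        have := hWc hw; rw [mem_sdiff] at this; exact this.2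
      obtain ⟨h1, h2, h3⟩ := recover_triple hXA hYB hAB hWAB
      simp only [h1, h2, h3]
  rw [key, Finset.card_product, Finset.card_product, Finset.card_powersetCard,
    Finset.card_powersetCard, Finset.card_powersetCard, hcompl]

lemma prod_pm_symmDiff {G : Type} [DecidableEq G] (Z : G → ℝ) (hZ : ∀ x, Z x = 1 ∨ Z x = -1)
    (S T : Finset G) :
    (∏ y ∈ S, Z y) * ∏ y ∈ T, Z y = ∏ y ∈ S ∆ T, Z y := by
  have step1 : (∏ y ∈ S, Z y) * ∏ y ∈ T, Z y
      = ((∏ y ∈ S \ T, Z y) * ∏ y ∈ S ∩ T, Z y) *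
        ((∏ y ∈ T \ S, Z y) * ∏ y ∈ T ∩ S, Z y) := by
    rw [← Finset.prod_union (Finset.disjoint_sdiff_inter S T),
      ← Finset.prod_union (Finset.disjoint_sdiff_inter T S),
      Finset.sdiff_union_inter, Finset.sdiff_union_inter]
  rw [step1, inter_comm T S]
  have hsq : (∏ y ∈ S ∩ T, Z y) * ∏ y ∈ S ∩ T, Z y = 1 := by
    rw [← Finset.prod_mul_distrib]
    exact Finset.prod_eq_one fun y _ => by rcases hZ y with h | h <;> rw [h] <;> norm_num
  have hsd : (∏ y ∈ S \ T, Z y) * ∏ y ∈ T \ S, Z y = ∏ y ∈ S ∆ T, Z y := by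
    rw [← Finset.prod_union disjoint_sdiff_sdiff]
    congr 1
  calc ((∏ y ∈ S \ T, Z y) * ∏ y ∈ S ∩ T, Z y) *
        ((∏ y ∈ T \ S, Z y) * ∏ y ∈ S ∩ T, Z y)
      = ((∏ y ∈ S \ T, Z y) * ∏ y ∈ T \ S, Z y) *
        ((∏ y ∈ S ∩ T, Z y) * ∏ y ∈ S ∩ T, Z y) := by ring
    _ = ∏ y ∈ S ∆ T, Z y := by rw [hsq, hsd, mul_one]

lemma prog_translate {G : Type} [AddCommGroup G] [DecidableEq G] (r : ℕ) (d x : G) :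
    prog r d x = (prog r d 0).image (x + ·) := by
  unfold prog
  rw [Finset.image_image]
  apply Finset.image_congr
  intro ℓ _
  simp [Function.comp]

/-- The key per-pair identity. -/
lemma pair_sum {G : Type} [AddCommGroup G] [Fintype G] [DecidableEq G]
    (r s : ℕ) (hs1 : 2 * r ≤ s) (di dj : G) (Z : G → ℝ) (hZ : ∀ x, Z x = 1 ∨ Z x = -1)
    (hc : (prog r di 0 ∪ prog r dj 0).card = 4 * r) :
    ∑ S : {S : Finset G // S.card = s}, ∑ T : {S : Finset G // S.card = s},
        (∏ y ∈ S.1, Z y) * Mmat r s di dj S T * (∏ y ∈ T.1, Z y)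
      = ((2 * r).choose r : ℝ) * (((2 * r).choose r : ℝ) *
            ((Fintype.card G - 4 * r).choose (s - 2 * r) : ℝ)) *
          ∑ x : G, ∏ y ∈ prog r di x ∪ prog r dj x, Z y := by
  classical
  have hIcc : (Finset.Icc 1 (2 * r)).card = 2 * r := by rw [Nat.card_Icc]; omega
  have hile : (prog r di 0).card ≤ 2 * r := by
    calc (prog r di 0).card ≤ (Finset.Icc 1 (2 * r)).card := Finset.card_image_le
      _ = 2 * r := hIcc
  have hjle : (prog r dj 0).card ≤ 2 * r := by
    calc (prog r dj 0).card ≤ (Finset.Icc 1 (2 * r)).card := Finset.card_image_le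
      _ = 2 * r := hIcc
  have hun : 4 * r ≤ (prog r di 0).card + (prog r dj 0).card :=
    hc ▸ Finset.card_union_le _ _
  have hi0 : (prog r di 0).card = 2 * r := by omega
  have hj0 : (prog r dj 0).card = 2 * r := by omega
  have hdisj0 : Disjoint (prog r di 0) (prog r dj 0) :=
    Finset.card_union_eq_card_add_card.mp (by omega)
  have hPi : ∀ x : G, (prog r di x).card = 2 * r := fun x => by
    rw [prog_translate, Finset.card_image_of_injective _ (add_right_injective x), hi0]
  have hPj : ∀ x : G, (prog r dj x).card = 2 * r := fun x => by
    rw [prog_translate, Finset.card_image_of_injective _ (add_right_injective x), hj0]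
  have hdisj : ∀ x : G, Disjoint (prog r di x) (prog r dj x) := fun x => by
    rw [prog_translate r di x, prog_translate r dj x]
    exact (Finset.disjoint_image (add_right_injective x)).mpr hdisj0
  have hPcard : ∀ x : G, (prog r di x ∪ prog r dj x).card = 4 * r := fun x => by
    rw [Finset.card_union_of_disjoint (hdisj x), hPi x, hPj x]; omega
  simp only [Mmat, hc, eq_self_iff_true, if_true]
  have hcast : ∀ S T : {S : Finset G // S.card = s},
      (∏ y ∈ S.1, Z y) * ((Finset.univ.filter fun x : G =>
          (S.1 ∩ prog r di x).card = r ∧ (S.1 ∩ prog r dj x).card = r ∧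
            S.1 ∆ T.1 = prog r di x ∪ prog r dj x).card : ℝ) * (∏ y ∈ T.1, Z y)
        = ∑ x : G, if ((S.1 ∩ prog r di x).card = r ∧ (S.1 ∩ prog r dj x).card = r ∧
            S.1 ∆ T.1 = prog r di x ∪ prog r dj x) then
            (∏ y ∈ S.1, Z y) * (∏ y ∈ T.1, Z y) else 0 := by
    intro S T
    rw [Finset.card_filter]
    push_cast
    rw [Finset.mul_sum, Finset.sum_mul]
    exact Finset.sum_congr rfl fun x _ => by split_ifs <;> ring
  calc
    ∑ S : {S : Finset G // S.card = s}, ∑ T : {S : Finset G // S.card = s},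
        (∏ y ∈ S.1, Z y) * ((Finset.univ.filter fun x : G =>
          (S.1 ∩ prog r di x).card = r ∧ (S.1 ∩ prog r dj x).card = r ∧
            S.1 ∆ T.1 = prog r di x ∪ prog r dj x).card : ℝ) * (∏ y ∈ T.1, Z y)
      = ∑ S : {S : Finset G // S.card = s}, ∑ T : {S : Finset G // S.card = s}, ∑ x : G,
          (if ((S.1 ∩ prog r di x).card = r ∧ (S.1 ∩ prog r dj x).card = r ∧
            S.1 ∆ T.1 = prog r di x ∪ prog r dj x) then
            (∏ y ∈ S.1, Z y) * (∏ y ∈ T.1, Z y) else 0) :=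
        Finset.sum_congr rfl fun S _ => Finset.sum_congr rfl fun T _ => hcast S T
    _ = ∑ S : {S : Finset G // S.card = s}, ∑ x : G, ∑ T : {S : Finset G // S.card = s},
          (if ((S.1 ∩ prog r di x).card = r ∧ (S.1 ∩ prog r dj x).card = r ∧
            S.1 ∆ T.1 = prog r di x ∪ prog r dj x) then
            (∏ y ∈ S.1, Z y) * (∏ y ∈ T.1, Z y) else 0) :=
        Finset.sum_congr rfl fun S _ => Finset.sum_comm
    _ = ∑ x : G, ∑ S : {S : Finset G // S.card = s}, ∑ T : {S : Finset G // S.card = s},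
          (if ((S.1 ∩ prog r di x).card = r ∧ (S.1 ∩ prog r dj x).card = r ∧
            S.1 ∆ T.1 = prog r di x ∪ prog r dj x) then
            (∏ y ∈ S.1, Z y) * (∏ y ∈ T.1, Z y) else 0) := Finset.sum_comm
    _ = ∑ x : G, ((2 * r).choose r : ℝ) * (((2 * r).choose r : ℝ) *
            ((Fintype.card G - 4 * r).choose (s - 2 * r) : ℝ)) *
          ∏ y ∈ prog r di x ∪ prog r dj x, Z y := by
        apply Finset.sum_congr rfl
        intro x _
        have hSx : ∀ S : {S : Finset G // S.card = s},
            (∑ T : {S : Finset G // S.card = s},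
              if ((S.1 ∩ prog r di x).card = r ∧ (S.1 ∩ prog r dj x).card = r ∧
                S.1 ∆ T.1 = prog r di x ∪ prog r dj x) then
                (∏ y ∈ S.1, Z y) * (∏ y ∈ T.1, Z y) else 0)
            = if ((S.1 ∩ prog r di x).card = r ∧ (S.1 ∩ prog r dj x).card = r) then
                ∏ y ∈ prog r di x ∪ prog r dj x, Z y else 0 := by
          intro S
          by_cases c1 : (S.1 ∩ prog r di x).card = r ∧ (S.1 ∩ prog r dj x).card = r
          · rw [if_pos c1]
            have hScap : (S.1 ∩ (prog r di x ∪ prog r dj x)).card = 2 * r := by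
              rw [inter_union_distrib_left, Finset.card_union_of_disjoint
                ((hdisj x).mono inter_subset_right inter_subset_right), c1.1, c1.2]
              omega
            have ht0card : (S.1 ∆ (prog r di x ∪ prog r dj x)).card = s := by
              have h4 := Finset.card_union_add_card_inter S.1 (prog r di x ∪ prog r dj x)
              rw [hScap, hPcard x, S.2] at h4
              rw [symmDiff_eq_sup_sdiff_inf, Finset.sup_eq_union, Finset.inf_eq_inter,
                Finset.card_sdiff_of_subset Finset.inter_subset_union, hScap]
              omega
            set t0 : {S : Finset G // S.card = s} :=
              ⟨S.1 ∆ (prog r di x ∪ prog r dj x), ht0card⟩ with ht0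
            have hiff : ∀ T : {S : Finset G // S.card = s},
                (S.1 ∆ T.1 = prog r di x ∪ prog r dj x) ↔ T = t0 := by
              intro T
              constructor
              · intro h
                apply Subtype.ext
                show T.1 = S.1 ∆ (prog r di x ∪ prog r dj x)
                rw [← h, symmDiff_symmDiff_cancel_left]
              · rintro rfl
                exact symmDiff_symmDiff_cancel_left S.1 _
            calc
              (∑ T : {S : Finset G // S.card = s},
                if ((S.1 ∩ prog r di x).card = r ∧ (S.1 ∩ prog r dj x).card = r ∧
                  S.1 ∆ T.1 = prog r di x ∪ prog r dj x) then
                  (∏ y ∈ S.1, Z y) * (∏ y ∈ T.1, Z y) else 0)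
                = ∑ T : {S : Finset G // S.card = s},
                    if T = t0 then (∏ y ∈ S.1, Z y) * (∏ y ∈ T.1, Z y) else 0 := by
                  apply Finset.sum_congr rfl
                  intro T _
                  simp only [c1.1, c1.2, eq_self_iff_true, true_and, hiff]
              _ = (∏ y ∈ S.1, Z y) * (∏ y ∈ t0.1, Z y) := by
                  rw [Finset.sum_ite_eq' Finset.univ t0, if_pos (Finset.mem_univ t0)]
              _ = ∏ y ∈ prog r di x ∪ prog r dj x, Z y := by
                  rw [prod_pm_symmDiff Z hZ]
                  show (∏ y ∈ S.1 ∆ (S.1 ∆ (prog r di x ∪ prog r dj x)), Z y) = _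
                  rw [symmDiff_symmDiff_cancel_left]
          · rw [if_neg c1]
            apply Finset.sum_eq_zero
            intro T _
            rw [if_neg]
            rintro ⟨h1, h2, -⟩
            exact c1 ⟨h1, h2⟩
        rw [Finset.sum_congr rfl fun S _ => hSx S]
        rw [(Finset.sum_subtype (Finset.univ.filter fun S : Finset G => S.card = s)
          (fun S => by simp) (fun S : Finset G =>
            if ((S ∩ prog r di x).card = r ∧ (S ∩ prog r dj x).card = r) then
              ∏ y ∈ prog r di x ∪ prog r dj x, Z y else 0)).symm]
        rw [← Finset.sum_filter, Finset.filter_filter, Finset.sum_const, nsmul_eq_mul]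
        rw [count_triple (prog r di x) (prog r dj x) (hdisj x) s r r (by omega)]
        rw [hPi x, hPj x]
        have e1 : 2 * r + 2 * r = 4 * r := by ring
        have e2 : r + r = 2 * r := by ring
        rw [e1, e2]
        push_cast
        ring
    _ = ((2 * r).choose r : ℝ) * (((2 * r).choose r : ℝ) *
            ((Fintype.card G - 4 * r).choose (s - 2 * r) : ℝ)) *
          ∑ x : G, ∏ y ∈ prog r di x ∪ prog r dj x, Z y := by
        rw [Finset.mul_sum]

/-- Inequality (11): the `∞→1` norm of the signed sum of the matrices `M_{ij}` is bounded
below by the signed progression-counting form, tested against the lifted vector `Z^{⊙s}`. -/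
theorem normInfToOne_lower_bound
    {G : Type} [AddCommGroup G] [Fintype G] [DecidableEq G]
    (r s m : ℕ) (hr : 1 ≤ r) (hs1 : 2 * r ≤ s) (hs2 : s ≤ Fintype.card G - 2 * r)
    (hm : 1 ≤ m) (hcop : Nat.Coprime (Fintype.card G) (Nat.factorial (2 * r)))
    (L R : Finset (Fin m)) (hLR : Disjoint L R) (D : Fin m → G)
    (σ τ : Fin m → ℝ) (hσ : ∀ i, σ i = 1 ∨ σ i = -1) (hτ : ∀ j, τ j = 1 ∨ τ j = -1)
    (Z : G → ℝ) (hZ : ∀ x, Z x = 1 ∨ Z x = -1) :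
    (Nat.choose (2 * r) r : ℝ) ^ 2 *
        (Nat.choose (Fintype.card G - 4 * r) (s - 2 * r) : ℝ) *
        ∑ p ∈ (L ×ˢ R).filter
            (fun p => (prog r (D p.1) 0 ∪ prog r (D p.2) 0).card = 4 * r),
          σ p.1 * τ p.2 * ∑ x : G, ∏ y ∈ prog r (D p.1) x ∪ prog r (D p.2) x, Z y ≤
      normInfToOne (∑ i ∈ L, ∑ j ∈ R, (σ i * τ j) • Mmat r s (D i) (D j)) := by
  classical
  set Nmat := ∑ i ∈ L, ∑ j ∈ R, (σ i * τ j) • Mmat r s (D i) (D j) with hNmat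
  set u : {S : Finset G // S.card = s} → ℝ := fun S => ∏ y ∈ S.1, Z y with hu
  have huabs : ∀ S, |u S| ≤ 1 := by
    intro S
    have : |u S| = 1 := by
      rw [hu]
      simp only
      rw [Finset.abs_prod]
      exact Finset.prod_eq_one fun y _ => by rcases hZ y with h | h <;> rw [h] <;> norm_num
    rw [this]
  have hbdd : BddAbove {c : ℝ | ∃ u' v' : {S : Finset G // S.card = s} → ℝ,
      (∀ a, |u' a| ≤ 1) ∧ (∀ a, |v' a| ≤ 1) ∧ c = ∑ a, ∑ b, u' a * Nmat a b * v' b} := by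
    refine ⟨∑ a, ∑ b, |Nmat a b|, ?_⟩
    rintro c ⟨u', v', hu', hv', rfl⟩
    apply Finset.sum_le_sum
    intro a _
    apply Finset.sum_le_sum
    intro b _
    calc u' a * Nmat a b * v' b ≤ |u' a * Nmat a b * v' b| := le_abs_self _
      _ = |u' a| * |Nmat a b| * |v' b| := by rw [abs_mul, abs_mul]
      _ ≤ 1 * |Nmat a b| * 1 := by
          have h1 := hu' a
          have h2 := hv' b
          have h3 : (0:ℝ) ≤ |Nmat a b| := abs_nonneg _
          have h4 : (0:ℝ) ≤ |u' a| := abs_nonneg _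
          have h5 : (0:ℝ) ≤ |v' b| := abs_nonneg _
          calc |u' a| * |Nmat a b| * |v' b|
              ≤ 1 * |Nmat a b| * |v' b| :=
                mul_le_mul_of_nonneg_right (mul_le_mul_of_nonneg_right h1 h3) h5
            _ ≤ 1 * |Nmat a b| * 1 :=
                mul_le_mul_of_nonneg_left h2 (by positivity)
      _ = |Nmat a b| := by ring
  have key : ∑ a, ∑ b, u a * Nmat a b * u b
      = (Nat.choose (2 * r) r : ℝ) ^ 2 *
          (Nat.choose (Fintype.card G - 4 * r) (s - 2 * r) : ℝ) *
          ∑ p ∈ (L ×ˢ R).filter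
              (fun p => (prog r (D p.1) 0 ∪ prog r (D p.2) 0).card = 4 * r),
            σ p.1 * τ p.2 * ∑ x : G, ∏ y ∈ prog r (D p.1) x ∪ prog r (D p.2) x, Z y := by
    have expand : ∀ a b : {S : Finset G // S.card = s},
        u a * Nmat a b * u b = ∑ p ∈ L ×ˢ R,
          σ p.1 * τ p.2 * (u a * Mmat r s (D p.1) (D p.2) a b * u b) := by
      intro a b
      rw [Finset.sum_product]
      simp only [hNmat, Matrix.sum_apply, Matrix.smul_apply, smul_eq_mul]
      rw [Finset.mul_sum, Finset.sum_mul]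
      refine Finset.sum_congr rfl fun i _ => ?_
      rw [Finset.mul_sum, Finset.sum_mul]
      exact Finset.sum_congr rfl fun j _ => by ring
    calc ∑ a, ∑ b, u a * Nmat a b * u b
        = ∑ a, ∑ b, ∑ p ∈ L ×ˢ R,
            σ p.1 * τ p.2 * (u a * Mmat r s (D p.1) (D p.2) a b * u b) :=
          Finset.sum_congr rfl fun a _ => Finset.sum_congr rfl fun b _ => expand a b
      _ = ∑ a, ∑ p ∈ L ×ˢ R, ∑ b,
            σ p.1 * τ p.2 * (u a * Mmat r s (D p.1) (D p.2) a b * u b) :=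
          Finset.sum_congr rfl fun a _ => Finset.sum_comm
      _ = ∑ p ∈ L ×ˢ R, ∑ a, ∑ b,
            σ p.1 * τ p.2 * (u a * Mmat r s (D p.1) (D p.2) a b * u b) := Finset.sum_comm
      _ = ∑ p ∈ L ×ˢ R, σ p.1 * τ p.2 *
            ∑ a, ∑ b, u a * Mmat r s (D p.1) (D p.2) a b * u b := by
          refine Finset.sum_congr rfl fun p _ => ?_
          rw [Finset.mul_sum]
          exact Finset.sum_congr rfl fun a _ => by rw [Finset.mul_sum]
      _ = ∑ p ∈ L ×ˢ R,
            (if (prog r (D p.1) 0 ∪ prog r (D p.2) 0).card = 4 * r then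
              σ p.1 * τ p.2 * (((2 * r).choose r : ℝ) * (((2 * r).choose r : ℝ) *
                ((Fintype.card G - 4 * r).choose (s - 2 * r) : ℝ)) *
                ∑ x : G, ∏ y ∈ prog r (D p.1) x ∪ prog r (D p.2) x, Z y)
            else 0) := by
          refine Finset.sum_congr rfl fun p _ => ?_
          by_cases hcp : (prog r (D p.1) 0 ∪ prog r (D p.2) 0).card = 4 * r
          · rw [if_pos hcp, pair_sum r s hs1 (D p.1) (D p.2) Z hZ hcp]
          · rw [if_neg hcp]
            have hz : ∀ a b : {S : Finset G // S.card = s},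
                Mmat r s (D p.1) (D p.2) a b = 0 := fun a b => by
              simp [Mmat, hcp]
            simp [hz]
      _ = ∑ p ∈ (L ×ˢ R).filter
              (fun p => (prog r (D p.1) 0 ∪ prog r (D p.2) 0).card = 4 * r),
            σ p.1 * τ p.2 * (((2 * r).choose r : ℝ) * (((2 * r).choose r : ℝ) *
              ((Fintype.card G - 4 * r).choose (s - 2 * r) : ℝ)) *
              ∑ x : G, ∏ y ∈ prog r (D p.1) x ∪ prog r (D p.2) x, Z y) :=
          (Finset.sum_filter _ _).symm
      _ = (Nat.choose (2 * r) r : ℝ) ^ 2 *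
            (Nat.choose (Fintype.card G - 4 * r) (s - 2 * r) : ℝ) *
            ∑ p ∈ (L ×ˢ R).filter
                (fun p => (prog r (D p.1) 0 ∪ prog r (D p.2) 0).card = 4 * r),
              σ p.1 * τ p.2 * ∑ x : G, ∏ y ∈ prog r (D p.1) x ∪ prog r (D p.2) x, Z y := by
          rw [Finset.mul_sum]
          exact Finset.sum_congr rfl fun p _ => by ring
  rw [← key]
  simp only [normInfToOne]
  exact le_csSup hbdd ⟨u, u, huabs, huabs, rfl⟩
end
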